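/- arXiv:math/0609123 — 7 statements merged into one kernel-verified Lean document; each statement's English description precedes it below -/
import Mathlib

section
/- For every odd integer n ≥ 3, the bidirected complete graph K*_n admits a rotationally symmetric nomadic near-Hamiltonian decomposition: there exist nomads g_0, …, g_{n−1} : ℕ → ZMod n, each tracing a near-Hamiltonian cycle, such that every ordered pair (u,v) of distinct elements of ZMod n occurs exactly once among the pairs (g_i(t), g_i(t+1)) with 0 ≤ i ≤ n−1 and 0 ≤ t ≤ n−2, such that g_i(t) ≠ g_j(t) whenever i ≠ j for every t, and such that for each pair i ≠ j there is a nonzero constant c ∈ ZMod n with g_i(t) − g_j(t) = c for all t. -/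
set_option maxHeartbeats 2000000

/-- Base sequence: integer representative in `[0,n)` of the base near-Hamiltonian cycle. -/
def nomadFa (n t : ℤ) : ℤ :=
  let m := n / 2
  if n % 4 = 1 then
    if t < m then (if t % 2 = 0 then n - 1 - t else t)
    else (if (t - m) % 2 = 0 then m - 2 - (t - m) else m + (t - m))
  else
    if t < m + 1 then (if t % 2 = 0 then t else n - t)
    else (if (t - m - 1) % 2 = 0 then (t - m - 1) + m + 2 else m + 1 - (t - m - 1))

/-- Difference representative in `(0,n)`. -/
def nomadDa (n t : ℤ) : ℤ :=
  let m := n / 2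
  if n % 4 = 1 then
    if t < m - 1 then (if t % 2 = 0 then 2 * t + 2 else n - 2 * t - 2)
    else if t = m - 1 then n - 1
    else if t = n - 2 then 1
    else (if (t - m) % 2 = 0 then 2 * (t - m) + 3 else n - 2 * (t - m) - 3)
  else
    if t < m then (if t % 2 = 0 then n - 2 * t - 1 else 2 * t + 1)
    else if t = m then 1
    else if t = n - 2 then n - 3
    else (if (t - m - 1) % 2 = 0 then n - 2 * (t - m - 1) - 2 else 2 * (t - m - 1) + 2)

theorem nomadFa_bound (n t : ℤ) (hn : 3 ≤ n) (ho : n % 2 = 1)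
    (h0 : 0 ≤ t) (h1 : t < n - 1) : 0 ≤ nomadFa n t ∧ nomadFa n t < n := by
  simp only [nomadFa]
  split_ifs <;> omega

theorem nomadFa_inj (n t₁ t₂ : ℤ) (hn : 3 ≤ n) (ho : n % 2 = 1)
    (h0 : 0 ≤ t₁) (h1 : t₁ < n - 1) (h2 : 0 ≤ t₂) (h3 : t₂ < n - 1)
    (he : nomadFa n t₁ = nomadFa n t₂) : t₁ = t₂ := by
  simp only [nomadFa] at he
  split_ifs at he <;> omega

theorem nomadDa_bound (n t : ℤ) (hn : 3 ≤ n) (ho : n % 2 = 1)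
    (h0 : 0 ≤ t) (h1 : t < n - 1) : 0 < nomadDa n t ∧ nomadDa n t < n := by
  simp only [nomadDa]
  split_ifs <;> omega

theorem nomadDa_inj (n t₁ t₂ : ℤ) (hn : 3 ≤ n) (ho : n % 2 = 1)
    (h0 : 0 ≤ t₁) (h1 : t₁ < n - 1) (h2 : 0 ≤ t₂) (h3 : t₂ < n - 1)
    (he : nomadDa n t₁ = nomadDa n t₂) : t₁ = t₂ := by
  simp only [nomadDa] at he
  split_ifs at he <;> omega

theorem nomadDa_spec (n t : ℤ) (hn : 3 ≤ n) (ho : n % 2 = 1)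
    (h0 : 0 ≤ t) (h1 : t < n - 1) :
    nomadFa n (if t = n - 2 then 0 else t + 1) - nomadFa n t - nomadDa n t = 0 ∨
    nomadFa n (if t = n - 2 then 0 else t + 1) - nomadFa n t - nomadDa n t = -n := by
  simp only [nomadFa, nomadDa]
  split_ifs <;> omega

/-- The base nomad, as a function into `ZMod n`, made periodic with period `n-1`. -/
def nomadF (n : ℕ) (t : ℕ) : ZMod n :=
  ((nomadFa (n : ℤ) ((t % (n - 1) : ℕ) : ℤ) : ℤ) : ZMod n)

theorem nomadF_apply (n t : ℕ) (h : t < n - 1) :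
    nomadF n t = ((nomadFa (n : ℤ) (t : ℤ) : ℤ) : ZMod n) := by
  rw [nomadF, Nat.mod_eq_of_lt h]

theorem nomad_cast_helper {n : ℕ} (a b c : ℤ) (h : a - b - c = 0 ∨ a - b - c = -(n : ℤ)) :
    ((a : ℤ) : ZMod n) = (b : ZMod n) + (c : ZMod n) := by
  have h0 : ((a - b - c : ℤ) : ZMod n) = 0 := by
    rcases h with h | h <;> rw [h] <;> simp
  push_cast at h0
  linear_combination h0

theorem nomad_cast_inj {n : ℕ} (a b : ℤ) (h0 : 0 ≤ a) (h1 : a < n) (h2 : 0 ≤ b) (h3 : b < n)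
    (h : ((a : ℤ) : ZMod n) = (b : ZMod n)) : a = b := by
  rw [ZMod.intCast_eq_intCast_iff] at h
  have hh : a % (n : ℤ) = b % (n : ℤ) := h
  rwa [Int.emod_eq_of_lt h0 h1, Int.emod_eq_of_lt h2 h3] at hh

theorem nomad_cast_ne_zero {n : ℕ} [NeZero n] (a : ℤ) (h0 : 0 < a) (h1 : a < n) :
    ((a : ℤ) : ZMod n) ≠ 0 := by
  intro h
  rw [ZMod.intCast_zmod_eq_zero_iff_dvd] at h
  have := Int.le_of_dvd h0 h
  omega

/-- For every odd `n ≥ 3`, the bidirected complete graph `K*_n` (vertex set `ZMod n`) admits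
a rotationally symmetric nomadic near-Hamiltonian decomposition. -/
theorem rs_nomadic_nearHam_decomposition_of_odd (n : ℕ) (hn3 : 3 ≤ n) (hodd : Odd n) :
    ∃ g : Fin n → ℕ → ZMod n,
      -- each nomad traces a near-Hamiltonian cycle: period n-1 …
      (∀ i, ∀ t, g i (t + (n - 1)) = g i t) ∧
      -- … and injective on {0, …, n-2}
      (∀ i, ∀ t₁ t₂, t₁ < n - 1 → t₂ < n - 1 → g i t₁ = g i t₂ → t₁ = t₂) ∧
      -- every ordered pair of distinct vertices occurs exactly once as a consecutive pair
      (∀ u v : ZMod n, u ≠ v →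
        ∃! x : Fin n × Fin (n - 1),
          g x.1 (x.2 : ℕ) = u ∧ g x.1 ((x.2 : ℕ) + 1) = v) ∧
      -- nomadic: distinct nomads never collide
      (∀ i j : Fin n, i ≠ j → ∀ t, g i t ≠ g j t) ∧
      -- rotationally symmetric: any two nomads differ by a nonzero constant
      (∀ i j : Fin n, i ≠ j → ∃ c : ZMod n, c ≠ 0 ∧ ∀ t, g i t - g j t = c) := by
  haveI : NeZero n := ⟨by omega⟩
  have hn' : 3 ≤ (n : ℤ) := by exact_mod_cast hn3
  have ho : (n : ℤ) % 2 = 1 := by obtain ⟨k, hk⟩ := hodd; omega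
  -- Fin-cast injectivity
  have hfin : ∀ i j : Fin n, ((i : ℕ) : ZMod n) = ((j : ℕ) : ZMod n) → i = j := by
    intro i j h
    have := congrArg ZMod.val h
    rw [ZMod.val_cast_of_lt i.isLt, ZMod.val_cast_of_lt j.isLt] at this
    exact Fin.ext this
  -- the step identity
  have hstep : ∀ t : ℕ, t < n - 1 →
      nomadF n (t + 1) = nomadF n t + ((nomadDa (n : ℤ) (t : ℤ) : ℤ) : ZMod n) := by
    intro t ht
    have hb := nomadDa_spec (n : ℤ) (t : ℤ) hn' ho (by positivity) (by omega)
    rcases Nat.lt_or_ge (t + 1) (n - 1) with hlt | hge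
    · have hne : ¬ ((t : ℤ) = (n : ℤ) - 2) := by omega
      rw [if_neg hne] at hb
      rw [nomadF_apply n t ht, nomadF_apply n (t + 1) hlt,
        show ((t + 1 : ℕ) : ℤ) = (t : ℤ) + 1 by push_cast; ring]
      exact nomad_cast_helper _ _ _ hb
    · have heq : t + 1 = n - 1 := by omega
      have hne : (t : ℤ) = (n : ℤ) - 2 := by omega
      rw [if_pos hne] at hb
      rw [nomadF_apply n t ht]
      have h0 : nomadF n (t + 1) = ((nomadFa (n : ℤ) (0 : ℤ) : ℤ) : ZMod n) := by
        rw [nomadF, heq, Nat.mod_self]; norm_num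
      rw [h0]
      exact nomad_cast_helper _ _ _ hb
    -- the difference map
  set Dm : Fin (n - 1) → ZMod n :=
    fun t => ((nomadDa (n : ℤ) ((t : ℕ) : ℤ) : ℤ) : ZMod n) with hDm
  have hDbound : ∀ t : Fin (n - 1),
      0 < nomadDa (n : ℤ) ((t : ℕ) : ℤ) ∧ nomadDa (n : ℤ) ((t : ℕ) : ℤ) < n := by
    intro t
    exact nomadDa_bound _ _ hn' ho (by positivity) (by have := t.isLt; omega)
  have hDinj : Function.Injective Dm := by
    intro a b h
    have ha := hDbound a
    have hb := hDbound b
    have := nomad_cast_inj _ _ (le_of_lt ha.1) ha.2 (le_of_lt hb.1) hb.2 h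
    have := nomadDa_inj (n : ℤ) _ _ hn' ho (by positivity) (by have := a.isLt; omega)
      (by positivity) (by have := b.isLt; omega) this
    exact Fin.ext (by exact_mod_cast this)
  have hsurj : ∀ d : ZMod n, d ≠ 0 → ∃ t : Fin (n - 1), Dm t = d := by
    intro d hd
    have himg : Finset.image Dm Finset.univ = Finset.univ.erase (0 : ZMod n) := by
      apply Finset.eq_of_subset_of_card_le
      · intro x hx
        obtain ⟨t, -, rfl⟩ := Finset.mem_image.mp hx
        exact Finset.mem_erase.mpr
          ⟨nomad_cast_ne_zero _ (hDbound t).1 (hDbound t).2, Finset.mem_univ _⟩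
      · rw [Finset.card_erase_of_mem (Finset.mem_univ _), Finset.card_univ, ZMod.card,
          Finset.card_image_of_injective _ hDinj, Finset.card_univ, Fintype.card_fin]
    have hmem : d ∈ Finset.image Dm Finset.univ := by
      rw [himg]; exact Finset.mem_erase.mpr ⟨hd, Finset.mem_univ _⟩
    obtain ⟨t, -, ht⟩ := Finset.mem_image.mp hmem
    exact ⟨t, ht⟩
  -- injectivity of the base nomad
  have hFinj : ∀ t₁ t₂ : ℕ, t₁ < n - 1 → t₂ < n - 1 → nomadF n t₁ = nomadF n t₂ → t₁ = t₂ := by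
    intro t₁ t₂ h1 h2 he
    rw [nomadF_apply n t₁ h1, nomadF_apply n t₂ h2] at he
    have hb1 := nomadFa_bound (n : ℤ) (t₁ : ℤ) hn' ho (by positivity) (by omega)
    have hb2 := nomadFa_bound (n : ℤ) (t₂ : ℤ) hn' ho (by positivity) (by omega)
    have := nomad_cast_inj _ _ hb1.1 hb1.2 hb2.1 hb2.2 he
    have := nomadFa_inj (n : ℤ) _ _ hn' ho (by positivity) (by omega)
      (by positivity) (by omega) this
    exact_mod_cast this
  refine ⟨fun i t => nomadF n t + ((i : ℕ) : ZMod n), ?_, ?_, ?_, ?_, ?_⟩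
  · -- periodicity
    intro i t
    simp only [nomadF, Nat.add_mod_right]
  · -- injectivity on a period
    intro i t₁ t₂ h1 h2 he
    exact hFinj t₁ t₂ h1 h2 (by exact add_right_cancel he)
  · -- every ordered pair exactly once
    intro u v huv
    obtain ⟨t, ht⟩ := hsurj (v - u) (sub_ne_zero.mpr (Ne.symm huv))
    set i₀ : Fin n := ⟨(u - nomadF n (t : ℕ)).val, ZMod.val_lt _⟩ with hi₀
    have hival : (((i₀ : ℕ)) : ZMod n) = u - nomadF n (t : ℕ) := by
      rw [hi₀]; exact ZMod.natCast_rightInverse _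
    have hst := hstep (t : ℕ) t.isLt
    refine ⟨⟨i₀, t⟩, ⟨?_, ?_⟩, ?_⟩
    · simpa using by linear_combination hival
    · simp only
      rw [hst]
      linear_combination hival + ht
    · rintro ⟨j, s⟩ ⟨hu', hv'⟩
      simp only at hu' hv'
      have hst' := hstep (s : ℕ) s.isLt
      have hds : Dm s = v - u := by
        rw [hDm]
        linear_combination hv' - hu' - hst'
      have hts : s = t := hDinj (by rw [hds, ht])
      subst hts
      have : ((j : ℕ) : ZMod n) = ((i₀ : ℕ) : ZMod n) := by
        rw [hival]
        linear_combination hu'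
      exact Prod.ext (hfin _ _ this) rfl
  · -- nomadic
    intro i j hij t h
    exact hij (hfin i j (by exact add_left_cancel h))
  · -- rotationally symmetric
    intro i j hij
    refine ⟨((i : ℕ) : ZMod n) - ((j : ℕ) : ZMod n), ?_, fun t => by ring⟩
    intro h
    exact hij (hfin i j (by linear_combination h))
end

section
/- For every odd integer n ≥ 3, there exists a sequence l_1, l_2, …, l_{n−1} of elements of ZMod n that enumerates every nonzero element of ZMod n exactly once, such that the partial sums s_0 = 0 and s_t = l_1 + l_2 + ⋯ + l_t for 1 ≤ t ≤ n−2 are pairwise distinct in ZMod n, and s_{n−1} = l_1 + ⋯ + l_{n−1} = 0. (Equivalently, K*_n contains a near-Hamiltonian cycle whose n−1 edges have pairwise distinct lengths.) -/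
/-!
Write `n = 2m + 1` and `k = ⌊m/2⌋`. The cycle zigzags `0, -1, 1, -2, 2, …` through `ZMod n`,
except that from round `k` on the negative side skips one vertex: `s(2i) = i`, and
`s(2i+1) = -(i+1)` for `i < k`, `s(2i+1) = -(i+2)` for `i ≥ k`, until the cycle returns to `0`
from `s(2m-1) = -(m+1)`. Its steps are `-(2i+1), 2i+2` before the skip, `-(2i+2), 2i+3` after it,
and `m+1` for the closing edge. As residues in `[1, 2m]` these are the even numbers `≤ 2k` and
`≥ 2m-2k+2`, the odd numbers `≤ 2m-2k-1` and `≥ 2k+3`, and `m+1`; since `2k ∈ {m-1, m}` they fill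
`[1, 2m]` exactly once. The partial sums of the steps are the vertices themselves, which are
pairwise distinct.
-/

open Finset Function

theorem existsUnique_apply_eq_of_injective {ι α : Type*} [Fintype ι] [Fintype α] {f : ι → α}
    {a : α} (hf : Injective f) (hfa : ∀ i, f i ≠ a)
    (hcard : Fintype.card α = Fintype.card ι + 1) {x : α} (hx : x ≠ a) : ∃! i, f i = x := by
  classical
  let g : ι → {y // y ≠ a} := fun i => ⟨f i, hfa i⟩
  have hg : Bijective g := (Fintype.bijective_iff_injective_and_card g).mpr
    ⟨fun i j h => hf (congrArg Subtype.val h), by simp [Fintype.card_subtype_compl, hcard]⟩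
  obtain ⟨i, hi, huniq⟩ := hg.existsUnique ⟨x, hx⟩
  exact ⟨i, congrArg Subtype.val hi, fun j hj => huniq j (Subtype.ext hj)⟩

def IsDistinctLengthNearHamCycle (n : ℕ) (l : ℕ → ZMod n) : Prop :=
  (∀ x : ZMod n, x ≠ 0 → ∃! t : Fin (n - 1), l (t : ℕ) = x) ∧
  (∀ t₁ t₂, t₁ ≤ n - 2 → t₂ ≤ n - 2 →
    (∑ i ∈ Finset.range t₁, l i) = (∑ i ∈ Finset.range t₂, l i) → t₁ = t₂) ∧
  (∑ i ∈ Finset.range (n - 1), l i) = 0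

theorem isDistinctLengthNearHamCycle_of_vertices {n : ℕ} (hn : 3 ≤ n) {s : ℕ → ZMod n}
    (hclosed : s (n - 1) = s 0) (hs : Set.InjOn s (Set.Iio (n - 1)))
    (hlen : Set.InjOn (fun t => s (t + 1) - s t) (Set.Iio (n - 1))) :
    IsDistinctLengthNearHamCycle n (fun t => s (t + 1) - s t) := by
  have : NeZero n := ⟨by omega⟩
  have hsum (t : ℕ) : ∑ i ∈ range t, (s (i + 1) - s i) = s t - s 0 := sum_range_sub s t
  refine ⟨fun x hx => ?_, fun t₁ t₂ h₁ h₂ h => ?_, by rw [hsum, hclosed, sub_self]⟩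
  · refine existsUnique_apply_eq_of_injective (a := 0)
      (fun i j h => Fin.ext (hlen i.isLt j.isLt h)) (fun t h => ?_) (by simp; omega) hx
    rw [sub_eq_zero] at h
    rcases Nat.lt_or_ge (t + 1) (n - 1) with ht | ht
    · exact absurd (hs ht t.isLt h) (by omega)
    · rw [show (t : ℕ) + 1 = n - 1 by omega, hclosed] at h
      exact absurd (hs (show 0 < n - 1 by omega) t.isLt h) (by omega)
  · rw [hsum, hsum, sub_left_inj] at h
    exact hs (show t₁ < n - 1 by omega) (show t₂ < n - 1 by omega) h

theorem ZMod.natCast_injOn_Iio (n : ℕ) : Set.InjOn (Nat.cast : ℕ → ZMod n) (Set.Iio n) :=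
  fun a ha b hb h => by
    simpa [ZMod.natCast_eq_natCast_iff', Nat.mod_eq_of_lt ha, Nat.mod_eq_of_lt hb] using h

namespace NearHamZigzag

-- `vertex n t ∈ [0, n)` represents `s(t)` in the notation above, with `vertex n (n - 1) = 0`
-- closing the cycle; `length n t` represents the step `s(t+1) - s(t)`.
def vertex (n t : ℕ) : ℕ :=
  if t = n - 1 then 0
  else if t % 2 = 0 then t / 2
  else if t / 2 < (n - 1) / 4 then n - 1 - t / 2 else n - 2 - t / 2

def length (n t : ℕ) : ℕ :=
  if t = n - 2 then (n + 1) / 2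
  else if t % 2 = 0 then (if t / 2 < (n - 1) / 4 then n - 1 - t else n - 2 - t)
  else if t / 2 < (n - 1) / 4 then t + 1 else t + 2

variable {n : ℕ}

theorem vertex_lt {t : ℕ} (ht : t < n - 1) : vertex n t < n := by
  unfold vertex; split_ifs <;> omega

theorem vertex_injOn : Set.InjOn (vertex n) (Set.Iio (n - 1)) := by
  intro t₁ h₁ t₂ h₂
  simp only [Set.mem_Iio] at h₁ h₂
  unfold vertex; split_ifs <;> omega

theorem vertex_last (hn : 3 ≤ n) : vertex n (n - 1) = vertex n 0 := by
  unfold vertex; split_ifs <;> omega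

theorem length_lt {t : ℕ} (ht : t < n - 1) : length n t < n := by
  unfold length; split_ifs <;> omega

theorem length_injOn (hodd : Odd n) : Set.InjOn (length n) (Set.Iio (n - 1)) := by
  obtain ⟨m, rfl⟩ := hodd
  intro t₁ h₁ t₂ h₂
  simp only [Set.mem_Iio] at h₁ h₂
  unfold length; split_ifs <;> omega

theorem vertex_add_length (hodd : Odd n) {t : ℕ} (ht : t < n - 1) :
    vertex n t + length n t = vertex n (t + 1) ∨
      vertex n t + length n t = vertex n (t + 1) + n := by
  obtain ⟨m, rfl⟩ := hodd
  unfold vertex length; split_ifs <;> omega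

theorem natCast_vertex_succ_sub (hodd : Odd n) {t : ℕ} (ht : t < n - 1) :
    (vertex n (t + 1) : ZMod n) - vertex n t = length n t := by
  rw [sub_eq_iff_eq_add', ← Nat.cast_add]
  rcases vertex_add_length hodd ht with h | h <;> simp [h]

end NearHamZigzag

/-- For every odd `n ≥ 3` there is a sequence `l 0, …, l (n-2)` of edge lengths (elements of
`ZMod n`) enumerating every nonzero element of `ZMod n` exactly once, whose partial sums
`s_t = l 0 + ⋯ + l (t-1)` for `0 ≤ t ≤ n-2` are pairwise distinct and whose total sum is `0`.
(Equivalently, `K*_n` contains a near-Hamiltonian cycle with pairwise distinct edge lengths.) -/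
theorem nearHam_cycle_distinct_lengths_of_odd (n : ℕ) (hn3 : 3 ≤ n) (hodd : Odd n) :
    ∃ l : ℕ → ZMod n,
      -- the lengths enumerate every nonzero element of `ZMod n` exactly once
      (∀ x : ZMod n, x ≠ 0 → ∃! t : Fin (n - 1), l (t : ℕ) = x) ∧
      -- the partial sums s_0, …, s_{n-2} are pairwise distinct
      (∀ t₁ t₂, t₁ ≤ n - 2 → t₂ ≤ n - 2 →
        (∑ i ∈ Finset.range t₁, l i) = (∑ i ∈ Finset.range t₂, l i) → t₁ = t₂) ∧
      -- s_{n-1} = 0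
      (∑ i ∈ Finset.range (n - 1), l i) = 0 := by
  have hs := (ZMod.natCast_injOn_Iio n).comp NearHamZigzag.vertex_injOn
    fun _ ht => NearHamZigzag.vertex_lt ht
  have hlen := (ZMod.natCast_injOn_Iio n).comp (NearHamZigzag.length_injOn hodd)
    fun _ ht => NearHamZigzag.length_lt ht
  have hsteps : Set.EqOn (Nat.cast ∘ NearHamZigzag.length n)
      (fun t => (NearHamZigzag.vertex n (t + 1) : ZMod n) - NearHamZigzag.vertex n t)
      (Set.Iio (n - 1)) :=
    fun _ ht => (NearHamZigzag.natCast_vertex_succ_sub hodd ht).symm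
  have hcycle := isDistinctLengthNearHamCycle_of_vertices (s := Nat.cast ∘ NearHamZigzag.vertex n)
    hn3 (congrArg Nat.cast (NearHamZigzag.vertex_last hn3)) hs (hlen.congr hsteps)
  exact ⟨_, hcycle.1, hcycle.2⟩
end

section
/- Let n = 2k+1 be an odd integer with n ≥ 3, and define integers a_1, …, a_{n−1} by: a_t = (−1)^{t+1} · t for 1 ≤ t ≤ k; a_t = (−1)^t · (n−1−t) for k+1 ≤ t ≤ n−2; and a_{n−1} = (−1)^k · k. Then the residues of a_1, …, a_{n−1} in ZMod n are pairwise distinct and nonzero (so they enumerate all nonzero elements of ZMod n), the partial sums s_0 = 0 and s_t = a_1 + ⋯ + a_t for 1 ≤ t ≤ n−2 are pairwise distinct modulo n, and a_1 + ⋯ + a_{n−1} ≡ 0 (mod n). -/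
/-!
Every `a_t` with `1 ≤ t ≤ 2k` is `±m` for some `1 ≤ m ≤ k`, and each of these `2k` integers
occurs exactly once; as they lie in `[-k, k]`, they stay distinct modulo `2k + 1`.
The partial sums `s_0, …, s_k` zigzag outwards `0, 1, -1, 2, -2, …`, after which
`s_{k+1}, …, s_{2k-1}` zigzag back inwards towards `±k`, filling the `k - 1` integers next to
the first batch on the side of `s_k`. Hence `s_0, …, s_{2k-1}` are distinct integers in a window
of `2k` consecutive integers, so distinct modulo `2k + 1`, and the last step `a_{2k}` returns
to `0`.
-/

open Finset

lemma ZMod.intCast_ne_zero_of_abs_lt {n : ℕ} {x : ℤ} (h0 : x ≠ 0) (h : |x| < n) :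
    (x : ZMod n) ≠ 0 := by
  rw [Ne, ZMod.intCast_zmod_eq_zero_iff_dvd]
  exact fun hdvd => h0 (Int.eq_zero_of_abs_lt_dvd hdvd h)

lemma Set.InjOn.intCast_zmod {ι : Type*} {n : ℕ} {f : ι → ℤ} {s : Set ι} (hf : s.InjOn f)
    (hs : ∀ i ∈ s, ∀ j ∈ s, |f i - f j| < n) : s.InjOn fun i => (f i : ZMod n) := by
  intro i hi j hj h
  rw [ZMod.intCast_eq_intCast_iff_dvd_sub] at h
  exact hf hi hj (sub_eq_zero.mp (Int.eq_zero_of_abs_lt_dvd h (hs j hj i hi))).symm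

lemma Finset.exists_mem_eq_of_injOn_of_ne {ι α : Type*} [Fintype α] {f : ι → α} {s : Finset ι}
    {x₀ : α} (hf : Set.InjOn f s) (hne : ∀ i ∈ s, f i ≠ x₀) (hcard : Fintype.card α ≤ #s + 1)
    {x : α} (hx : x ≠ x₀) : ∃ i ∈ s, f i = x := by
  classical
  obtain ⟨i, hi, rfl⟩ := surjOn_of_injOn_of_card_le (t := univ.erase x₀) f
    (fun i hi => mem_erase.mpr ⟨hne i hi, mem_univ _⟩) hf
    (by rw [card_erase_of_mem (mem_univ _), card_univ]; omega) (mem_erase.mpr ⟨hx, mem_univ _⟩)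
  exact ⟨i, hi, rfl⟩

namespace NearHamCycle

def altSigned (m : ℕ) : ℤ := (-1) ^ (m + 1) * m

lemma abs_altSigned (m : ℕ) : |altSigned m| = m := by
  simp [altSigned, abs_mul]

lemma altSigned_inj {m m' : ℕ} : altSigned m = altSigned m' ↔ m = m' := by
  refine ⟨fun h => ?_, congrArg _⟩
  have := congrArg abs h
  rwa [abs_altSigned, abs_altSigned, Nat.cast_inj] at this

lemma altSigned_eq_neg_altSigned_iff {m m' : ℕ} :
    altSigned m = -altSigned m' ↔ m = 0 ∧ m' = 0 := by
  refine ⟨fun h => ?_, fun ⟨hm, hm'⟩ => by simp [altSigned, hm, hm']⟩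
  have hmm' : m = m' := by
    have := congrArg abs h
    rwa [abs_neg, abs_altSigned, abs_altSigned, Nat.cast_inj] at this
  subst hmm'
  have hm : (m : ℤ) = 0 := by rw [← abs_altSigned, show altSigned m = 0 by linarith, abs_zero]
  exact ⟨by exact_mod_cast hm, by exact_mod_cast hm⟩

lemma neg_altSigned_eq_altSigned_iff {m m' : ℕ} :
    -altSigned m = altSigned m' ↔ m = 0 ∧ m' = 0 := by
  rw [eq_comm, altSigned_eq_neg_altSigned_iff, and_comm]

lemma altSigned_two_mul (j : ℕ) : altSigned (2 * j) = -(2 * j : ℤ) := by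
  simp [altSigned, pow_succ]

lemma altSigned_two_mul_add_one (j : ℕ) : altSigned (2 * j + 1) = 2 * j + 1 := by
  simp [altSigned, pow_succ]

lemma neg_altSigned_sub {m t : ℕ} (h : t ≤ 2 * m) :
    -altSigned (2 * m - t) = (-1) ^ t * (2 * m - t : ℤ) := by
  have hsign : (-1 : ℤ) ^ (2 * m - t + 1) = (-1) ^ (t + 1) :=
    neg_one_pow_congr (by simp only [Nat.even_iff]; omega)
  rw [altSigned, hsign, pow_succ, Nat.cast_sub h]
  push_cast; ring

def zigzag : ℕ → ℤ
  | 0 => 0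
  | t + 1 => zigzag t + altSigned (t + 1)

lemma zigzag_two_mul (j : ℕ) : zigzag (2 * j) = -j := by
  induction j with
  | zero => rfl
  | succ j ih =>
    rw [show 2 * (j + 1) = 2 * j + 1 + 1 by ring, zigzag, zigzag, ih, altSigned_two_mul_add_one,
      show 2 * j + 1 + 1 = 2 * (j + 1) by ring, altSigned_two_mul]
    push_cast; ring

lemma zigzag_two_mul_add_one (j : ℕ) : zigzag (2 * j + 1) = j + 1 := by
  rw [zigzag, zigzag_two_mul, altSigned_two_mul_add_one]
  ring

lemma zigzag_injective : Function.Injective zigzag := by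
  intro s t h
  obtain ⟨i, rfl | rfl⟩ := Nat.even_or_odd' s <;> obtain ⟨j, rfl | rfl⟩ := Nat.even_or_odd' t <;>
    simp only [zigzag_two_mul, zigzag_two_mul_add_one] at h <;> omega

lemma zigzag_bounds (t : ℕ) : -(t : ℤ) ≤ 2 * zigzag t ∧ 2 * zigzag t ≤ t + 1 := by
  obtain ⟨j, rfl | rfl⟩ := Nat.even_or_odd' t <;>
    simp only [zigzag_two_mul, zigzag_two_mul_add_one] <;> omega

lemma zigzag_ne_altSigned_add_zigzag {k s u : ℕ} (hs : s ≤ k) (hu : u + 2 ≤ k) :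
    zigzag s ≠ altSigned k + zigzag u := by
  have := zigzag_bounds s
  have := zigzag_bounds u
  obtain ⟨j, rfl | rfl⟩ := Nat.even_or_odd' k
  · rw [altSigned_two_mul]; omega
  · rw [altSigned_two_mul_add_one]; omega

def edgeLength (k t : ℕ) : ℤ :=
  if t ≤ k then altSigned t else if t < 2 * k then -altSigned (2 * k - t) else -altSigned k

variable {k : ℕ}

lemma abs_edgeLength_le (t : ℕ) : |edgeLength k t| ≤ k := by
  unfold edgeLength
  split_ifs <;> simp only [abs_neg, abs_altSigned] <;> omega

lemma edgeLength_ne_zero {t : ℕ} (h1 : 1 ≤ t) (h2 : t ≤ 2 * k) : edgeLength k t ≠ 0 := by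
  rw [← abs_pos]
  unfold edgeLength
  split_ifs <;> simp only [abs_neg, abs_altSigned] <;> omega

lemma edgeLength_injOn : Set.InjOn (edgeLength k) (Set.Icc 1 (2 * k)) := by
  rintro s ⟨hs1, hs2⟩ t ⟨ht1, ht2⟩ h
  unfold edgeLength at h
  split_ifs at h <;>
    simp only [neg_inj, altSigned_inj, altSigned_eq_neg_altSigned_iff,
      neg_altSigned_eq_altSigned_iff] at h <;> omega

def partialSum (k t : ℕ) : ℤ := ∑ i ∈ Icc 1 t, edgeLength k i

lemma partialSum_succ (t : ℕ) : partialSum k (t + 1) = partialSum k t + edgeLength k (t + 1) :=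
  sum_Icc_succ_top (by omega) _

lemma partialSum_of_le {t : ℕ} (h : t ≤ k) : partialSum k t = zigzag t := by
  induction t with
  | zero => rfl
  | succ t ih =>
    rw [partialSum_succ, ih (by omega), zigzag, edgeLength, if_pos h]

lemma partialSum_add {j : ℕ} (h : j < k) :
    partialSum k (k + j) = altSigned k + zigzag (k - 1 - j) := by
  induction j with
  | zero =>
    obtain ⟨k, rfl⟩ : ∃ k', k = k' + 1 := ⟨k - 1, by omega⟩
    rw [add_zero, partialSum_of_le le_rfl, zigzag, Nat.add_sub_cancel, Nat.sub_zero, add_comm]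
  | succ j ih =>
    rw [← add_assoc, partialSum_succ, ih (by omega), edgeLength, if_neg (by omega),
      if_pos (by omega), show k - 1 - j = k - 1 - (j + 1) + 1 by omega, zigzag,
      show 2 * k - (k + j + 1) = k - 1 - (j + 1) + 1 by omega]
    ring

lemma partialSum_two_mul : partialSum k (2 * k) = 0 := by
  obtain _ | k := k
  · rfl
  rw [show 2 * (k + 1) = (k + 1 + k) + 1 by ring, partialSum_succ, partialSum_add (by omega),
    edgeLength, if_neg (by omega), if_neg (by omega), show k + 1 - 1 - k = 0 by omega, zigzag]
  ring

lemma partialSum_cases {t : ℕ} (ht : t < 2 * k) :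
    (t ≤ k ∧ partialSum k t = zigzag t) ∨
      ∃ u, u + 2 ≤ k ∧ t = 2 * k - 1 - u ∧ partialSum k t = altSigned k + zigzag u := by
  by_cases hle : t ≤ k
  · exact .inl ⟨hle, partialSum_of_le hle⟩
  · refine .inr ⟨2 * k - 1 - t, by omega, by omega, ?_⟩
    rw [show 2 * k - 1 - t = k - 1 - (t - k) by omega, ← partialSum_add (by omega),
      Nat.add_sub_cancel' (by omega)]

lemma partialSum_injOn : Set.InjOn (partialSum k) (Set.Iio (2 * k)) := by
  intro s hs t ht h
  rcases partialSum_cases hs with ⟨hs, hs'⟩ | ⟨u, hu, rfl, hs'⟩ <;>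
    rcases partialSum_cases ht with ⟨ht, ht'⟩ | ⟨v, hv, rfl, ht'⟩ <;> rw [hs', ht'] at h
  · exact zigzag_injective h
  · exact absurd h (zigzag_ne_altSigned_add_zigzag hs hv)
  · exact absurd h.symm (zigzag_ne_altSigned_add_zigzag ht hu)
  · rw [zigzag_injective (add_left_cancel h)]

lemma exists_partialSum_mem_Ico :
    ∃ L : ℤ, ∀ t < 2 * k, partialSum k t ∈ Set.Ico L (L + 2 * k) := by
  obtain ⟨j, rfl | rfl⟩ := Nat.even_or_odd' k
  · refine ⟨-(3 * j - 1), fun t ht => ?_⟩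
    rcases partialSum_cases ht with ⟨hle, h⟩ | ⟨u, hu, -, h⟩ <;> rw [Set.mem_Ico, h]
    · have := zigzag_bounds t; omega
    · have := zigzag_bounds u; rw [altSigned_two_mul]; omega
  · refine ⟨-j, fun t ht => ?_⟩
    rcases partialSum_cases ht with ⟨hle, h⟩ | ⟨u, hu, -, h⟩ <;> rw [Set.mem_Ico, h]
    · have := zigzag_bounds t; omega
    · have := zigzag_bounds u; rw [altSigned_two_mul_add_one]; omega

lemma edgeLength_cast_ne_zero {t : ℕ} (h1 : 1 ≤ t) (h2 : t ≤ 2 * k) :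
    (edgeLength k t : ZMod (2 * k + 1)) ≠ 0 :=
  ZMod.intCast_ne_zero_of_abs_lt (edgeLength_ne_zero h1 h2) (by
    have := abs_edgeLength_le (k := k) t; push_cast; omega)

lemma edgeLength_cast_injOn :
    Set.InjOn (fun t => (edgeLength k t : ZMod (2 * k + 1))) (Set.Icc 1 (2 * k)) :=
  edgeLength_injOn.intCast_zmod fun s _ t _ => by
    have hs := abs_le.mp (abs_edgeLength_le (k := k) s)
    have ht := abs_le.mp (abs_edgeLength_le (k := k) t)
    rw [abs_lt]; push_cast; omega

lemma partialSum_cast_injOn :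
    Set.InjOn (fun t => (partialSum k t : ZMod (2 * k + 1))) (Set.Iio (2 * k)) := by
  obtain ⟨L, hL⟩ := exists_partialSum_mem_Ico (k := k)
  refine partialSum_injOn.intCast_zmod fun s hs t ht => ?_
  have hLs := Set.mem_Ico.mp (hL s hs)
  have hLt := Set.mem_Ico.mp (hL t ht)
  rw [abs_lt]; push_cast; omega

end NearHamCycle

open NearHamCycle

/-- For odd `n = 2k+1 ≥ 3`, the explicit sequence
`a_t = (-1)^{t+1}·t` for `1 ≤ t ≤ k`, `a_t = (-1)^t·(n-1-t)` for `k+1 ≤ t ≤ n-2`, and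
`a_{n-1} = (-1)^k·k` has pairwise distinct nonzero residues mod `n` (enumerating all nonzero
elements of `ZMod n`), its partial sums `s_0, …, s_{n-2}` are pairwise distinct mod `n`, and
the total sum is `≡ 0 (mod n)`. -/
theorem explicit_sequence_traces_nearHam_cycle (n k : ℕ) (hk : 1 ≤ k) (hn : n = 2 * k + 1)
    (a : ℕ → ℤ)
    (ha1 : ∀ t : ℕ, 1 ≤ t → t ≤ k → a t = (-1) ^ (t + 1) * t)
    (ha2 : ∀ t : ℕ, k + 1 ≤ t → t ≤ n - 2 → a t = (-1) ^ t * ((n : ℤ) - 1 - t))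
    (ha3 : a (n - 1) = (-1) ^ k * k) :
    -- residues are nonzero
    (∀ t, 1 ≤ t → t ≤ n - 1 → ((a t : ZMod n) ≠ 0)) ∧
    -- residues are pairwise distinct
    (∀ t₁ t₂, 1 ≤ t₁ → t₁ ≤ n - 1 → 1 ≤ t₂ → t₂ ≤ n - 1 →
      ((a t₁ : ZMod n) = (a t₂ : ZMod n)) → t₁ = t₂) ∧
    -- hence they enumerate all nonzero elements of `ZMod n`
    (∀ x : ZMod n, x ≠ 0 → ∃ t, 1 ≤ t ∧ t ≤ n - 1 ∧ (a t : ZMod n) = x) ∧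
    -- partial sums s_0, …, s_{n-2} are pairwise distinct mod n
    (∀ t₁ t₂, t₁ ≤ n - 2 → t₂ ≤ n - 2 →
      (((∑ i ∈ Finset.Icc 1 t₁, a i : ℤ) : ZMod n) =
        ((∑ i ∈ Finset.Icc 1 t₂, a i : ℤ) : ZMod n)) → t₁ = t₂) ∧
    -- the total sum is ≡ 0 (mod n)
    ((n : ℤ) ∣ ∑ i ∈ Finset.Icc 1 (n - 1), a i) := by
  subst hn
  have hagree : ∀ t ∈ Set.Icc 1 (2 * k), a t = edgeLength k t := by
    rintro t ⟨h1, h2⟩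
    unfold edgeLength
    split_ifs with hle hlt
    · rw [ha1 t h1 hle, altSigned]
    · rw [ha2 t (by omega) (by omega), neg_altSigned_sub (by omega)]
      push_cast; ring
    · rw [show t = 2 * k + 1 - 1 by omega, ha3, altSigned, pow_succ]
      ring
  have hsum : ∀ t ≤ 2 * k, ∑ i ∈ Icc 1 t, a i = partialSum k t := fun t ht =>
    sum_congr rfl fun i hi => hagree i (by rw [mem_Icc] at hi; exact ⟨hi.1, hi.2.trans ht⟩)
  have hinj : Set.InjOn (fun t => (a t : ZMod (2 * k + 1))) (Set.Icc 1 (2 * k)) :=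
    edgeLength_cast_injOn.congr fun t ht => by simp only [hagree t ht]
  have hne : ∀ t, 1 ≤ t → t ≤ 2 * k → (a t : ZMod (2 * k + 1)) ≠ 0 := fun t h1 h2 => by
    rw [hagree t ⟨h1, h2⟩]; exact edgeLength_cast_ne_zero h1 h2
  rw [show 2 * k + 1 - 1 = 2 * k by omega, show 2 * k + 1 - 2 = 2 * k - 1 by omega]
  refine ⟨hne, fun t₁ t₂ h₁ h₁' h₂ h₂' h => hinj ⟨h₁, h₁'⟩ ⟨h₂, h₂'⟩ h, fun x hx => ?_,
    fun t₁ t₂ h₁ h₂ h => ?_, by rw [hsum _ le_rfl, partialSum_two_mul]; exact dvd_zero _⟩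
  · obtain ⟨t, ht, rfl⟩ := exists_mem_eq_of_injOn_of_ne (s := Icc 1 (2 * k)) (by simpa using hinj)
      (fun t ht => by rw [mem_Icc] at ht; exact hne t ht.1 ht.2) (by simp) hx
    rw [mem_Icc] at ht
    exact ⟨t, ht.1, ht.2, rfl⟩
  · rw [hsum t₁ (by omega), hsum t₂ (by omega)] at h
    exact partialSum_cast_injOn (Set.mem_Iio.mpr (by omega)) (Set.mem_Iio.mpr (by omega)) h
end

section
/- For every even integer n ≥ 4, the bidirected complete graph K*_n has no rotationally symmetric nomadic near-Hamiltonian decomposition: there do not exist nomads g_0, …, g_{n−1} : ℕ → ZMod n, each tracing a near-Hamiltonian cycle, covering every ordered pair of distinct vertices exactly once as a consecutive pair (g_i(t), g_i(t+1)) with 0 ≤ t ≤ n−2, such that every two distinct nomads differ by a nonzero additive constant of ZMod n at all times. -/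
open Finset

lemma sum_univ_zmod (n : ℕ) [NeZero n] :
    ∑ x : ZMod n, x = ∑ k ∈ Finset.range n, (k : ZMod n) := by
  refine (Finset.sum_nbij' (fun k : ℕ => (k : ZMod n)) (fun x : ZMod n => x.val)
    ?_ ?_ ?_ ?_ ?_).symm
  · intro k _; exact Finset.mem_univ _
  · intro x _; exact Finset.mem_range.mpr (ZMod.val_lt x)
  · intro k hk; exact ZMod.val_cast_of_lt (Finset.mem_range.mp hk)
  · intro x _; exact ZMod.natCast_zmod_val x
  · intro k _; rfl

lemma sum_univ_zmod_ne_zero (n : ℕ) [NeZero n] (hn : 4 ≤ n) (heven : Even n) :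
    ∑ x : ZMod n, x ≠ 0 := by
  obtain ⟨m, hm⟩ := heven
  have hmn : n = 2 * m := by omega
  have hsum : ∑ k ∈ Finset.range n, k = m * (n - 1) := by
    have h2 : (∑ k ∈ Finset.range n, k) * 2 = n * (n - 1) := Finset.sum_range_id_mul_two n
    have h3 : n * (n - 1) = (m * (n - 1)) * 2 := by rw [hmn]; ring
    rw [h3] at h2
    exact Nat.eq_of_mul_eq_mul_right two_pos h2
  rw [sum_univ_zmod n, ← Nat.cast_sum, hsum]
  have hcast : ((m * (n - 1) : ℕ) : ZMod n) = - (m : ZMod n) := by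
    push_cast [Nat.cast_sub (by omega : 1 ≤ n)]
    have hzero : ((n : ℕ) : ZMod n) = 0 := ZMod.natCast_self n
    rw [hzero]
    ring
  rw [hcast]
  intro h
  have hm0 : ((m : ℕ) : ZMod n) = 0 := neg_eq_zero.mp h
  rw [ZMod.natCast_eq_zero_iff] at hm0
  have := Nat.le_of_dvd (by omega) hm0
  omega

/-- For every even `n ≥ 4`, the bidirected complete graph `K*_n` has no rotationally symmetric
nomadic near-Hamiltonian decomposition. -/
theorem no_rs_nomadic_decomposition_of_even (n : ℕ) (hn : 4 ≤ n) (heven : Even n) :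
    ¬ ∃ g : Fin n → ℕ → ZMod n,
      -- each nomad traces a near-Hamiltonian cycle: period n-1 …
      (∀ i, ∀ t, g i (t + (n - 1)) = g i t) ∧
      -- … and injective on {0, …, n-2}
      (∀ i, ∀ t₁ t₂, t₁ < n - 1 → t₂ < n - 1 → g i t₁ = g i t₂ → t₁ = t₂) ∧
      -- every ordered pair of distinct vertices occurs exactly once as a consecutive pair
      (∀ u v : ZMod n, u ≠ v →
        ∃! x : Fin n × Fin (n - 1),
          g x.1 (x.2 : ℕ) = u ∧ g x.1 ((x.2 : ℕ) + 1) = v) ∧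
      -- rotationally symmetric: any two nomads differ by a nonzero constant at all times
      (∀ i j : Fin n, i ≠ j → ∃ c : ZMod n, c ≠ 0 ∧ ∀ t, g i t - g j t = c) := by
  rintro ⟨g, hper, hinj, huniq, hrot⟩
  haveI : NeZero n := ⟨by omega⟩
  set i0 : Fin n := ⟨0, by omega⟩ with hi0
  set c : Fin n → ZMod n := fun i => g i 0 - g i0 0 with hc
  -- every nomad is a translate of nomad i0 by c i
  have hconst : ∀ i : Fin n, ∀ t, g i t = g i0 t + c i := by
    intro i t
    by_cases h : i = i0
    · subst h; simp [hc]
    · obtain ⟨c', _, hc'⟩ := hrot i i0 h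
      have h0 := hc' 0
      have ht := hc' t
      show g i t = g i0 t + (g i 0 - g i0 0)
      linear_combination ht - h0
  -- c is injective, hence surjective
  have hcinj : Function.Injective c := by
    intro i j hij
    by_contra hne
    obtain ⟨c', hc'0, hc'⟩ := hrot i j hne
    apply hc'0
    have h0 := hc' 0
    have hij' : g i 0 - g i0 0 = g j 0 - g i0 0 := hij
    linear_combination -h0 + hij'
  have hcsurj : Function.Surjective c := by
    have hb : Function.Bijective c := by
      rw [Fintype.bijective_iff_injective_and_card]
      exact ⟨hcinj, by simp [ZMod.card]⟩
    exact hb.2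
  -- the step differences of nomad i0
  set f : Fin (n - 1) → ZMod n := fun t => g i0 ((t : ℕ) + 1) - g i0 (t : ℕ) with hf
  have hfne : ∀ t, f t ≠ 0 := by
    intro t h
    have heq : g i0 ((t : ℕ) + 1) = g i0 (t : ℕ) := sub_eq_zero.mp h
    rcases lt_or_eq_of_le (Nat.succ_le_of_lt t.isLt) with h1 | h1
    · have := hinj i0 ((t : ℕ) + 1) (t : ℕ) h1 t.isLt heq
      omega
    · -- (t : ℕ) + 1 = n - 1
      have hper0 : g i0 (n - 1) = g i0 0 := by
        have := hper i0 0; simpa using this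
      rw [← h1] at hper0
      have h2 : g i0 0 = g i0 (t : ℕ) := hper0.symm.trans heq
      have := hinj i0 0 (t : ℕ) (by omega) t.isLt h2
      omega
  have hfinj : Function.Injective f := by
    intro t₁ t₂ h12
    obtain ⟨i, hi⟩ := hcsurj (g i0 (t₁ : ℕ) - g i0 (t₂ : ℕ))
    have hu : g i (t₂ : ℕ) = g i0 (t₁ : ℕ) := by
      rw [hconst i, hi]; ring
    have hd : g i0 ((t₁ : ℕ) + 1) - g i0 (t₁ : ℕ) = g i0 ((t₂ : ℕ) + 1) - g i0 (t₂ : ℕ) := h12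
    have hv : g i ((t₂ : ℕ) + 1) = g i0 ((t₁ : ℕ) + 1) := by
      rw [hconst i, hi]
      linear_combination -hd
    have hne : g i0 (t₁ : ℕ) ≠ g i0 ((t₁ : ℕ) + 1) := by
      intro h
      exact hfne t₁ (by simp only [hf, ← h, sub_self])
    obtain ⟨x, _, hx⟩ := huniq (g i0 (t₁ : ℕ)) (g i0 ((t₁ : ℕ) + 1)) hne
    have h1 : ((i0, t₁) : Fin n × Fin (n - 1)) = x := hx (i0, t₁) ⟨rfl, rfl⟩
    have h2 : ((i, t₂) : Fin n × Fin (n - 1)) = x := hx (i, t₂) ⟨hu, hv⟩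
    have h3 : ((i0, t₁) : Fin n × Fin (n - 1)) = (i, t₂) := h1.trans h2.symm
    exact congrArg Prod.snd h3
  -- image of f is exactly the nonzero elements
  have himg : Finset.image f Finset.univ = (Finset.univ : Finset (ZMod n)).erase 0 := by
    apply Finset.eq_of_subset_of_card_le
    · intro x hx
      simp only [Finset.mem_image] at hx
      obtain ⟨t, _, ht⟩ := hx
      exact Finset.mem_erase.mpr ⟨ht ▸ hfne t, Finset.mem_univ _⟩
    · rw [Finset.card_erase_of_mem (Finset.mem_univ _),
        Finset.card_image_of_injective _ hfinj]
      simp [ZMod.card]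
  -- telescoping sum is zero
  have htel : ∑ t : Fin (n - 1), f t = 0 := by
    rw [show f = fun t : Fin (n - 1) => (fun k => g i0 (k + 1) - g i0 k) (t : ℕ) from rfl]
    rw [Fin.sum_univ_eq_sum_range (fun k => g i0 (k + 1) - g i0 k)]
    rw [Finset.sum_range_sub (fun k => g i0 k)]
    have h0 := hper i0 0
    simp only [Nat.zero_add] at h0
    rw [h0]
    ring
  -- but the sum of all nonzero elements is nonzero
  have hsum : ∑ x ∈ (Finset.univ : Finset (ZMod n)).erase 0, x = ∑ x : ZMod n, x := by
    rw [← Finset.sum_erase_add _ _ (Finset.mem_univ (0 : ZMod n))]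
    ring
  have hfin : (0 : ZMod n) = ∑ x : ZMod n, x := by
    rw [← hsum, ← himg, Finset.sum_image (fun a _ b _ h => hfinj h), htel]
  exact sum_univ_zmod_ne_zero n hn heven hfin.symm
end

section
/- For every prime p ≥ 3, the bidirected complete graph K*_p has a Hamiltonian decomposition that is not nomadic. Specifically: (1) for each nonzero l ∈ ZMod p, the nomad g_l(t) = t·l traces a Hamiltonian cycle (g_l(t+p) = g_l(t) for all t and g_l is injective on {0,…,p−1}), and every ordered pair (u,v) of distinct elements of ZMod p occurs exactly once among the pairs (g_l(t), g_l(t+1)) with l nonzero and 0 ≤ t ≤ p−1; and (2) for every choice of starting vertices, i.e., every function v assigning to each nonzero l ∈ ZMod p an element v(l) ∈ ZMod p, there exist distinct nonzero l, l' ∈ ZMod p and a natural number t such that v(l) + t·l = v(l') + t·l'. -/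
/-!
Working in the field `ZMod p`: the nomad `t ↦ t·l` with `l ≠ 0` visits every vertex once per
period because multiplication by `l` is injective; the arc `(u, v)` is traversed exactly by the
nomad of length `l = v - u`, at the time `t = u / (v - u)`. Any two nomads of distinct lengths
`l ≠ l'` with starting vertices `a, b` meet at time `t = (b - a) / (l - l')`, and for `p ≥ 3`
there are at least two distinct lengths, so no choice of starting vertices avoids a collision.
-/

namespace ZMod

theorem natCast_add_self_mul (n t : ℕ) (l : ZMod n) :
    ((t + n : ℕ) : ZMod n) * l = (t : ZMod n) * l := by
  simp

theorem natCast_mul_injOn {n : ℕ} {l : ZMod n} (hl : IsUnit l) {t₁ t₂ : ℕ} (h₁ : t₁ < n)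
    (h₂ : t₂ < n) (h : (t₁ : ZMod n) * l = (t₂ : ZMod n) * l) : t₁ = t₂ := by
  rw [← val_cast_of_lt h₁, ← val_cast_of_lt h₂, hl.mul_left_inj.mp h]

theorem natCast_finVal_bijective (n : ℕ) [NeZero n] :
    Function.Bijective (fun i : Fin n ↦ ((i : ℕ) : ZMod n)) := by
  refine ⟨fun i j h ↦ Fin.ext ?_, fun z ↦ ⟨⟨z.val, val_lt z⟩, natCast_zmod_val z⟩⟩
  rw [← val_cast_of_lt i.isLt, ← val_cast_of_lt j.isLt]
  exact congrArg val h

theorem exists_natCast_add_mul_eq {n : ℕ} [NeZero n] {l l' : ZMod n} (h : IsUnit (l - l'))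
    (a b : ZMod n) : ∃ t : ℕ, a + t * l = b + t * l' := by
  obtain ⟨u, hu⟩ := h
  have hu_inv : (↑u⁻¹ * (l - l') : ZMod n) = 1 := by rw [← hu, Units.inv_mul]
  refine ⟨((b - a) * ↑u⁻¹ : ZMod n).val, ?_⟩
  rw [natCast_zmod_val]
  linear_combination (b - a) * hu_inv

end ZMod

theorem existsUnique_mul_eq_and_add_one_mul_eq {K : Type*} [Field K] {u v : K} (huv : u ≠ v) :
    ∃! x : {l : K // l ≠ 0} × K, x.2 * x.1 = u ∧ (x.2 + 1) * x.1 = v := by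
  have hvu : v - u ≠ 0 := sub_ne_zero.mpr huv.symm
  refine ⟨(⟨v - u, hvu⟩, u / (v - u)), ⟨div_mul_cancel₀ u hvu, ?_⟩, ?_⟩
  · rw [add_one_mul, div_mul_cancel₀ u hvu]
    ring
  · rintro ⟨⟨l, hl⟩, t⟩ ⟨rfl, rfl⟩
    have hl_eq : (t + 1) * l - t * l = l := by ring
    simp only [hl_eq, Prod.mk.injEq, true_and]
    exact (mul_div_cancel_right₀ t hl).symm

/-- For every prime `p ≥ 3`, the decomposition of `K*_p` into the `p-1` constant-length
Hamiltonian cycles `g_l(t) = t·l` (`l ≠ 0`) is a Hamiltonian decomposition that is not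
nomadic: (1) each `g_l` traces a Hamiltonian cycle and every ordered pair of distinct
vertices occurs exactly once as a consecutive pair; (2) for every choice of starting
vertices, some two nomads collide. -/
theorem prime_constant_length_decomposition_not_nomadic (p : ℕ) (hp : p.Prime) (hp3 : 3 ≤ p) :
    -- (1a) each g_l traces a Hamiltonian cycle
    (∀ l : ZMod p, l ≠ 0 →
      (∀ t : ℕ, ((t + p : ℕ) : ZMod p) * l = ((t : ℕ) : ZMod p) * l) ∧
      (∀ t₁ t₂ : ℕ, t₁ < p → t₂ < p →
        ((t₁ : ℕ) : ZMod p) * l = ((t₂ : ℕ) : ZMod p) * l → t₁ = t₂)) ∧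
    -- (1b) every ordered pair of distinct vertices occurs exactly once as a consecutive pair
    (∀ u v : ZMod p, u ≠ v →
      ∃! x : {l : ZMod p // l ≠ 0} × Fin p,
        ((x.2 : ℕ) : ZMod p) * (x.1 : ZMod p) = u ∧
        (((x.2 : ℕ) + 1 : ℕ) : ZMod p) * (x.1 : ZMod p) = v) ∧
    -- (2) for every choice of starting vertices, some two nomads collide
    (∀ v : {l : ZMod p // l ≠ 0} → ZMod p,
      ∃ l l' : {l : ZMod p // l ≠ 0}, l ≠ l' ∧
        ∃ t : ℕ, v l + (t : ZMod p) * (l : ZMod p) = v l' + (t : ZMod p) * (l' : ZMod p)) := by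
  have : Fact p.Prime := ⟨hp⟩
  have : Fact (2 < p) := ⟨hp3⟩
  refine ⟨fun l hl ↦ ⟨fun t ↦ ZMod.natCast_add_self_mul p t l,
    fun _ _ h₁ h₂ ↦ ZMod.natCast_mul_injOn hl.isUnit h₁ h₂⟩, fun u v huv ↦ ?_, fun v ↦ ?_⟩
  · let e := (Equiv.refl {l : ZMod p // l ≠ 0}).prodCongr
      (Equiv.ofBijective _ (ZMod.natCast_finVal_bijective p))
    refine (e.existsUnique_congr fun x ↦ ?_).mpr (existsUnique_mul_eq_and_add_one_mul_eq huv)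
    push_cast
    rfl
  · have h_one_ne_neg_one : (1 : ZMod p) ≠ -1 := ZMod.neg_one_ne_one.symm
    refine ⟨⟨1, one_ne_zero⟩, ⟨-1, neg_ne_zero.mpr one_ne_zero⟩,
      fun h ↦ h_one_ne_neg_one (congrArg Subtype.val h), ?_⟩
    exact ZMod.exists_natCast_add_mul_eq (sub_ne_zero.mpr h_one_ne_neg_one).isUnit _ _
end

section
/- Let n be a positive integer with n ≡ 0 (mod 4) and set k = n/2. Then there exists a sequence of integers l_1, …, l_{n−1} such that: l_1 = k; for 2 ≤ t ≤ n−1, 1 ≤ |l_t| ≤ k−1; for each j ∈ {1,…,k−1} there are exactly two indices t with |l_t| = j, and for these two indices the values l_t are equal; the partial sums S_0 = 0 and S_t = l_1 + ⋯ + l_t for 1 ≤ t ≤ n−2 are pairwise distinct modulo n; S_{n−1} ≡ 0 (mod n); and whenever t ≠ t' with l_t = l_{t'}, the partial sums S_{t−1} and S_{t'−1} have opposite parity (S_{t−1} ≢ S_{t'−1} (mod 2)). -/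
/-!
Write `n = 4m`, so `k = 2m`. The cycle is given by a closed form for its vertices. Its edge
lengths are `±j` with the sign fixed by the parity of `j`, and each magnitude `j` occurs at exactly
two steps, which are adjacent when `j = 1` and otherwise two apart with an edge of magnitude of the
other parity in between; so the two edges of magnitude `j` are equal and start at vertices of
opposite parity. All vertices lie in `[0, 6m]`, so two congruent vertices differ by `0` or `±4m`,
which the closed form rules out.
-/

open Finset

theorem Finset.sum_Icc_one_sub_pred {G : Type*} [AddCommGroup G] (f : ℕ → G) (t : ℕ) :
    ∑ i ∈ Icc 1 t, (f i - f (i - 1)) = f t - f 0 := by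
  induction t with
  | zero => simp
  | succ t ih =>
    rw [sum_Icc_succ_top (Nat.le_add_left 1 t), ih, Nat.add_sub_cancel]
    abel

theorem Int.eq_neg_or_eq_zero_or_eq_of_dvd_of_abs_lt {n x : ℤ} (h : n ∣ x) (hx : |x| < 2 * n) :
    x = -n ∨ x = 0 ∨ x = n := by
  obtain ⟨c, rfl⟩ := h
  have hn : 0 < n := by linarith [abs_nonneg (n * c)]
  rw [abs_mul, abs_of_pos hn] at hx
  obtain ⟨hc₁, hc₂⟩ := abs_lt.mp (lt_of_mul_lt_mul_left (by linarith) hn.le : |c| < 2)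
  interval_cases c <;> simp

namespace NearHamiltonianCycle

/-- After `0, k, k + 1, k + 2`, odd steps climb `k + 3, …, n`, while even steps visit the pairs
`(k - 2, k - 1), (k - 4, k - 3), …`; once these drop below `m` they are shifted by `n - 1`
(by `-1` modulo `n`), so that exactly one vertex near `m` is skipped. Vertices are kept as
integers, not residues, so that their differences are the edge lengths. -/
def vertex (m t : ℕ) : ℤ :=
  if t = 0 then 0
  else if t = 1 then 2 * m
  else if t % 2 = 1 then 2 * m + (t + 1) / 2
  else if 2 * (t / 4) < m then 2 * m - 2 * (t / 4) + t / 2 % 2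
  else 6 * m - 2 * (t / 4) + t / 2 % 2 - 1

def length (m t : ℕ) : ℤ := vertex m t - vertex m (t - 1)

def magnitude (m t : ℕ) : ℕ :=
  if t ≤ 3 then 1
  else if 2 * (t / 4) < m then 4 * (t / 4) + t % 2
  else 4 * m - 4 * (t / 4) - 1 - t % 2

def firstOccurrence (m j : ℕ) : ℕ :=
  if j = 1 then 2 else if j % 4 ≤ 1 then j else 4 * m - j - 1

def secondOccurrence (m j : ℕ) : ℕ :=
  if j = 1 then 3 else if j % 4 ≤ 1 then j + 2 else 4 * m - j + 1

theorem sum_length (m t : ℕ) : ∑ i ∈ Icc 1 t, length m i = vertex m t := by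
  simp only [length, sum_Icc_one_sub_pred, vertex, if_pos, sub_zero]

theorem length_one (m : ℕ) : length m 1 = 2 * m := by
  simp [length, vertex]

theorem length_eq {m t : ℕ} (h2 : 2 ≤ t) (ht : t ≤ 4 * m - 1) :
    length m t = if magnitude m t % 2 = 1 then (magnitude m t : ℤ) else -magnitude m t := by
  simp only [length, vertex, magnitude]
  split_ifs <;> omega

theorem natAbs_length {m t : ℕ} (h2 : 2 ≤ t) (ht : t ≤ 4 * m - 1) :
    (length m t).natAbs = magnitude m t := by
  rw [length_eq h2 ht]
  split_ifs <;> simp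

theorem magnitude_mem_Icc {m t : ℕ} (h2 : 2 ≤ t) (ht : t ≤ 4 * m - 1) :
    magnitude m t ∈ Icc 1 (2 * m - 1) := by
  simp only [mem_Icc, magnitude]
  split_ifs <;> omega

theorem magnitude_eq_iff {m j t : ℕ} (hj1 : 1 ≤ j) (hj : j ≤ 2 * m - 1) (h2 : 2 ≤ t)
    (ht : t ≤ 4 * m - 1) :
    magnitude m t = j ↔ t = firstOccurrence m j ∨ t = secondOccurrence m j := by
  simp only [magnitude, firstOccurrence, secondOccurrence]
  split_ifs <;> omega

theorem occurrence_bounds {m j : ℕ} (hj1 : 1 ≤ j) (hj : j ≤ 2 * m - 1) :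
    2 ≤ firstOccurrence m j ∧ firstOccurrence m j < secondOccurrence m j ∧
      secondOccurrence m j ≤ 4 * m - 1 := by
  simp only [firstOccurrence, secondOccurrence]
  split_ifs <;> omega

theorem two_le_of_natAbs_length_le {m t : ℕ} (ht : t ∈ Icc 1 (4 * m - 1))
    (habs : (length m t).natAbs ≤ 2 * m - 1) : 2 ≤ t := by
  rw [mem_Icc] at ht
  by_contra h
  rw [show t = 1 by omega, length_one] at habs
  omega

theorem filter_natAbs_length_eq {m j : ℕ} (hj1 : 1 ≤ j) (hj : j ≤ 2 * m - 1) :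
    (Icc 1 (4 * m - 1)).filter (fun t => (length m t).natAbs = j) =
      {firstOccurrence m j, secondOccurrence m j} := by
  ext t
  obtain ⟨h2, hlt, hle⟩ := occurrence_bounds hj1 hj
  simp only [mem_filter, mem_insert, mem_singleton]
  constructor
  · rintro ⟨ht, habs⟩
    have h2t := two_le_of_natAbs_length_le ht (habs ▸ hj)
    rw [natAbs_length h2t (mem_Icc.1 ht).2] at habs
    exact (magnitude_eq_iff hj1 hj h2t (mem_Icc.1 ht).2).1 habs
  · intro hocc
    have h2t : 2 ≤ t := by omega
    have ht : t ≤ 4 * m - 1 := by omega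
    exact ⟨mem_Icc.2 ⟨by omega, ht⟩,
      (natAbs_length h2t ht).trans ((magnitude_eq_iff hj1 hj h2t ht).2 hocc)⟩

theorem length_ne_length_one {m t : ℕ} (h2 : 2 ≤ t) (ht : t ≤ 4 * m - 1) :
    length m t ≠ length m 1 := by
  intro h
  have := congrArg Int.natAbs h
  rw [natAbs_length h2 ht, length_one] at this
  have := mem_Icc.1 (magnitude_mem_Icc h2 ht)
  omega

theorem length_eq_of_natAbs_eq {m t t' : ℕ} (ht : t ∈ Icc 1 (4 * m - 1))
    (ht' : t' ∈ Icc 1 (4 * m - 1)) (habs : (length m t).natAbs = (length m t').natAbs)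
    (hle : (length m t).natAbs ≤ 2 * m - 1) : length m t = length m t' := by
  have h2 := two_le_of_natAbs_length_le ht hle
  have h2' := two_le_of_natAbs_length_le ht' (habs ▸ hle)
  rw [mem_Icc] at ht ht'
  rw [natAbs_length h2 ht.2, natAbs_length h2' ht'.2] at habs
  rw [length_eq h2 ht.2, length_eq h2' ht'.2, habs]

theorem odd_vertex_sub {m j : ℕ} (hj1 : 1 ≤ j) (hj : j ≤ 2 * m - 1) :
    Odd (vertex m (secondOccurrence m j - 1) - vertex m (firstOccurrence m j - 1)) := by
  obtain ⟨h2, hlt, hle⟩ := occurrence_bounds hj1 hj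
  rcases eq_or_ne j 1 with rfl | hj1'
  · have hm : 0 < m := by omega
    simp [firstOccurrence, secondOccurrence, vertex, hm]
  set a := firstOccurrence m j
  have hb : secondOccurrence m j - 1 = a + 1 := by
    simp only [a, firstOccurrence, secondOccurrence]
    split_ifs <;> omega
  have hmag : magnitude m a = j := (magnitude_eq_iff hj1 hj h2 (by omega)).2 (Or.inl rfl)
  have hmag' : magnitude m (a + 1) % 2 ≠ j % 2 := by
    simp only [a, magnitude, firstOccurrence]
    split_ifs <;> omega
  have hsum : vertex m (a + 1) - vertex m (a - 1) = length m a + length m (a + 1) := by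
    simp only [length, Nat.add_sub_cancel]
    ring
  rw [hb, hsum, length_eq h2 (by omega), length_eq (by omega) (by omega), hmag, Int.odd_iff]
  split_ifs <;> omega

theorem vertex_pred_emod_two_ne {m t t' : ℕ} (ht : t ∈ Icc 1 (4 * m - 1))
    (ht' : t' ∈ Icc 1 (4 * m - 1)) (hne : t ≠ t') (h : length m t = length m t') :
    vertex m (t - 1) % 2 ≠ vertex m (t' - 1) % 2 := by
  rw [mem_Icc] at ht ht'
  have h2 : 2 ≤ t := by
    by_contra h1
    obtain rfl : t = 1 := by omega
    exact length_ne_length_one (by omega) ht'.2 h.symm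
  have h2' : 2 ≤ t' := by
    by_contra h1
    obtain rfl : t' = 1 := by omega
    exact length_ne_length_one h2 ht.2 h
  obtain ⟨j, hjt⟩ : ∃ j, magnitude m t = j := ⟨_, rfl⟩
  have hjt' : magnitude m t' = j := by
    rw [← natAbs_length h2' ht'.2, ← h, natAbs_length h2 ht.2, hjt]
  obtain ⟨hj1, hj⟩ := mem_Icc.1 (hjt ▸ magnitude_mem_Icc h2 ht.2)
  have hodd := Int.odd_iff.1 (odd_vertex_sub hj1 hj)
  rcases (magnitude_eq_iff hj1 hj h2 ht.2).1 hjt with rfl | rfl <;>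
    rcases (magnitude_eq_iff hj1 hj h2' ht'.2).1 hjt' with rfl | rfl <;> omega

theorem vertex_last (m : ℕ) : vertex m (4 * m - 1) = 4 * m := by
  simp only [vertex]
  split_ifs <;> omega

theorem vertex_mem_Icc {m t : ℕ} (ht : t ≤ 4 * m - 1) : vertex m t ∈ Icc 0 (6 * m : ℤ) := by
  simp only [mem_Icc, vertex]
  split_ifs <;> omega

theorem vertex_injOn (m : ℕ) :
    Set.InjOn (fun t => (vertex m t : ZMod (4 * m))) (Set.Iic (4 * m - 2)) := by
  intro t₁ (h₁ : t₁ ≤ 4 * m - 2) t₂ (h₂ : t₂ ≤ 4 * m - 2) h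
  rcases Nat.eq_zero_or_pos m with rfl | hm
  · omega
  have hdvd : ((4 * m : ℕ) : ℤ) ∣ vertex m t₂ - vertex m t₁ :=
    (ZMod.intCast_eq_intCast_iff_dvd_sub _ _ _).1 h
  have hb₁ := mem_Icc.1 (vertex_mem_Icc (m := m) (t := t₁) (by omega))
  have hb₂ := mem_Icc.1 (vertex_mem_Icc (m := m) (t := t₂) (by omega))
  rcases Int.eq_neg_or_eq_zero_or_eq_of_dvd_of_abs_lt hdvd (by rw [abs_lt]; push_cast; omega)
    with h | h | h <;> push_cast at h <;> simp only [vertex] at h <;> split_ifs at h <;> omega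

end NearHamiltonianCycle

open NearHamiltonianCycle in
theorem exists_edge_length_sequence_of_four_dvd_general (n k : ℕ) (h4 : n % 4 = 0)
    (hk : k = n / 2) :
    ∃ l : ℕ → ℤ,
      l 1 = (k : ℤ) ∧
      (∀ t, 2 ≤ t → t ≤ n - 1 → 1 ≤ (l t).natAbs ∧ (l t).natAbs ≤ k - 1) ∧
      -- each magnitude j occurs exactly twice, with equal values at those occurrences
      (∀ j : ℕ, 1 ≤ j → j ≤ k - 1 →
        ((Finset.Icc 1 (n - 1)).filter (fun t => (l t).natAbs = j)).card = 2 ∧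
        (∀ t t', t ∈ Finset.Icc 1 (n - 1) → t' ∈ Finset.Icc 1 (n - 1) →
          (l t).natAbs = j → (l t').natAbs = j → l t = l t')) ∧
      -- partial sums S_0, …, S_{n-2} pairwise distinct mod n
      (∀ t₁ t₂, t₁ ≤ n - 2 → t₂ ≤ n - 2 →
        (((∑ i ∈ Finset.Icc 1 t₁, l i : ℤ) : ZMod n) =
          ((∑ i ∈ Finset.Icc 1 t₂, l i : ℤ) : ZMod n)) → t₁ = t₂) ∧
      -- S_{n-1} ≡ 0 (mod n)
      ((n : ℤ) ∣ ∑ i ∈ Finset.Icc 1 (n - 1), l i) ∧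
      -- equal lengths start at vertices of opposite parity
      (∀ t t', t ∈ Finset.Icc 1 (n - 1) → t' ∈ Finset.Icc 1 (n - 1) → t ≠ t' →
        l t = l t' →
        (∑ i ∈ Finset.Icc 1 (t - 1), l i) % 2 ≠ (∑ i ∈ Finset.Icc 1 (t' - 1), l i) % 2) := by
  obtain ⟨m, rfl⟩ : ∃ m, n = 4 * m := ⟨n / 4, by omega⟩
  obtain rfl : k = 2 * m := by omega
  refine ⟨length m, by rw [length_one]; push_cast; ring, fun t h2 ht => ?_,
    fun j hj1 hj => ⟨?_, fun t t' ht ht' hjt hjt' => ?_⟩, fun t₁ t₂ h₁ h₂ h => ?_, ?_,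
    fun t t' ht ht' hne h => ?_⟩
  · rw [natAbs_length h2 ht]
    exact mem_Icc.1 (magnitude_mem_Icc h2 ht)
  · rw [filter_natAbs_length_eq hj1 hj, card_pair (occurrence_bounds hj1 hj).2.1.ne]
  · exact length_eq_of_natAbs_eq ht ht' (hjt.trans hjt'.symm) (hjt ▸ hj)
  · rw [sum_length, sum_length] at h
    exact vertex_injOn m h₁ h₂ h
  · rw [sum_length, vertex_last]
    push_cast
    exact dvd_rfl
  · rw [sum_length, sum_length]
    exact vertex_pred_emod_two_ne ht ht' hne h

/-- For `n ≡ 0 (mod 4)` and `k = n/2`, there is a sequence of integer edge lengths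
`l_1, …, l_{n-1}` with `l_1 = k`, `1 ≤ |l_t| ≤ k-1` for `t ≥ 2`, each magnitude
`j ∈ {1,…,k-1}` occurring exactly twice and with equal values, partial sums
`S_0, …, S_{n-2}` pairwise distinct mod `n`, total sum `≡ 0 (mod n)`, and the two edges of
each repeated length starting at vertices of opposite parity. -/
theorem exists_edge_length_sequence_of_four_dvd (n k : ℕ) (hn : 0 < n) (h4 : n % 4 = 0)
    (hk : k = n / 2) :
    ∃ l : ℕ → ℤ,
      l 1 = (k : ℤ) ∧
      (∀ t, 2 ≤ t → t ≤ n - 1 → 1 ≤ (l t).natAbs ∧ (l t).natAbs ≤ k - 1) ∧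
      -- each magnitude j occurs exactly twice, with equal values at those occurrences
      (∀ j : ℕ, 1 ≤ j → j ≤ k - 1 →
        ((Finset.Icc 1 (n - 1)).filter (fun t => (l t).natAbs = j)).card = 2 ∧
        (∀ t t', t ∈ Finset.Icc 1 (n - 1) → t' ∈ Finset.Icc 1 (n - 1) →
          (l t).natAbs = j → (l t').natAbs = j → l t = l t')) ∧
      -- partial sums S_0, …, S_{n-2} pairwise distinct mod n
      (∀ t₁ t₂, t₁ ≤ n - 2 → t₂ ≤ n - 2 →
        (((∑ i ∈ Finset.Icc 1 t₁, l i : ℤ) : ZMod n) =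
          ((∑ i ∈ Finset.Icc 1 t₂, l i : ℤ) : ZMod n)) → t₁ = t₂) ∧
      -- S_{n-1} ≡ 0 (mod n)
      ((n : ℤ) ∣ ∑ i ∈ Finset.Icc 1 (n - 1), l i) ∧
      -- equal lengths start at vertices of opposite parity
      (∀ t t', t ∈ Finset.Icc 1 (n - 1) → t' ∈ Finset.Icc 1 (n - 1) → t ≠ t' →
        l t = l t' →
        (∑ i ∈ Finset.Icc 1 (t - 1), l i) % 2 ≠ (∑ i ∈ Finset.Icc 1 (t' - 1), l i) % 2) :=
  exists_edge_length_sequence_of_four_dvd_general n k h4 hk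
end

section
/- Let n be an even integer with n ≥ 4 and k = n/2, and suppose there exists a sequence of integers l_1, …, l_{n−1} such that: l_1 = k; for 2 ≤ t ≤ n−1, 1 ≤ |l_t| ≤ k−1; for each j ∈ {1,…,k−1} there are exactly two indices t with |l_t| = j, and for these two indices the values l_t are equal; the partial sums S_0 = 0 and S_t = l_1 + ⋯ + l_t for 1 ≤ t ≤ n−2 are pairwise distinct modulo n; S_{n−1} ≡ 0 (mod n); and whenever t ≠ t' with l_t = l_{t'}, S_{t−1} ≢ S_{t'−1} (mod 2). Then K*_n admits a nomadic near-Hamiltonian decomposition, consisting of the n/2 nomads g_c(t) = S_t + 2c (c = 0,…,n/2−1) together with the n/2 nomads h_c(t) = 1 + 2c + T_t (c = 0,…,n/2−1), where T_0 = 0, T_1 = k, and T_t = k − (S_t − k) for t ≥ 1, each index taken modulo the period n−1. -/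
/-!
Each nomad is an affine image `S_t + 2c` or `1 + 2c - S_t` of the cyclic partial sums `S`
(using `T_t ≡ -S_t`, as `2k = n`), so periodicity and injectivity on a period come from `S`, and
two nomads at the same time differ by `2(c - c')` or by an odd element of `ZMod n`.

There are `n(n-1)` edges and `n(n-1)` ordered pairs, so it suffices that the edges are pairwise
distinct. Equal edges have lengths congruent modulo `n`, and the lengths lie in `(-k, k]`. Within
one group this makes the lengths equal integers; the parity condition then forces equal times,
because the two starting points `S_t + 2c`, `S_{t'} + 2c'` have the same parity. Across the two
groups it forces `l_t ≡ -l_{t'}`, which happens only for the first edge (of length `k ≡ -k`),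
whose starting points `2c` and `1 + 2c'` have different parities.
-/

/-- Partial sums `S_t = l_1 + ⋯ + l_t` of a sequence of edge lengths. -/
def nomadPartialSum (l : ℕ → ℤ) (t : ℕ) : ℤ := ∑ i ∈ Finset.Icc 1 t, l i

/-- The partial sums for the second group of nomads: `T_0 = 0`, `T_t = k - (S_t - k)` for
`t ≥ 1` (so `T_1 = k`). -/
def nomadPartialSum' (l : ℕ → ℤ) (k : ℕ) (t : ℕ) : ℤ :=
  if t = 0 then 0 else (k : ℤ) - (nomadPartialSum l t - (k : ℤ))

/-- The family of `n` nomads: `g_c(t) = S_{t mod (n-1)} + 2c` for the first `n/2` nomads and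
`h_c(t) = 1 + 2c + T_{t mod (n-1)}` for the remaining `n/2` nomads. -/
def nomadFamily (n k : ℕ) (l : ℕ → ℤ) : Fin (n / 2) ⊕ Fin (n / 2) → ℕ → ZMod n
  | Sum.inl c, t => ((nomadPartialSum l (t % (n - 1)) : ℤ) : ZMod n) + 2 * ((c : ℕ) : ZMod n)
  | Sum.inr c, t =>
      1 + 2 * ((c : ℕ) : ZMod n) + ((nomadPartialSum' l k (t % (n - 1)) : ℤ) : ZMod n)

theorem ZMod.intCast_injOn_Ioc {n : ℕ} {m M : ℤ} (h : M ≤ m + n) :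
    Set.InjOn ((↑) : ℤ → ZMod n) (Set.Ioc m M) := by
  intro a ha b hb hab
  have hdvd : (n : ℤ) ∣ b - a := (ZMod.intCast_eq_intCast_iff_dvd_sub a b n).mp hab
  have hlt : |b - a| < n := abs_lt.mpr ⟨by linarith [ha.2, hb.1], by linarith [ha.1, hb.2]⟩
  linarith [Int.eq_zero_of_abs_lt_dvd hdvd hlt]

theorem ZMod.two_mul_val_inj {n : ℕ} {a b : Fin (n / 2)} :
    2 * ((a : ℕ) : ZMod n) = 2 * (b : ℕ) ↔ a = b := by
  refine ⟨fun h => Fin.ext ?_, fun h => h ▸ rfl⟩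
  have h' : ((2 * a : ℕ) : ZMod n) = ((2 * b : ℕ) : ZMod n) := by push_cast; exact h
  rw [ZMod.natCast_eq_natCast_iff', Nat.mod_eq_of_lt (by omega), Nat.mod_eq_of_lt (by omega)] at h'
  omega

theorem ZMod.intCast_emod_two_eq_of_eq_add_two_mul {n : ℕ} (hn : 2 ∣ n) {a b : ℤ} {x : ZMod n}
    (h : (a : ZMod n) = b + 2 * x) : a % 2 = b % 2 := by
  have h2 := congrArg (ZMod.castHom hn (ZMod 2)) h
  simp only [map_intCast, map_add, map_mul, map_ofNat] at h2
  rw [show (2 : ZMod 2) = 0 from rfl, zero_mul, add_zero] at h2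
  exact (ZMod.intCast_eq_intCast_iff' a b 2).mp h2

theorem ZMod.one_ne_two_mul {n : ℕ} (hn : 2 ∣ n) (x : ZMod n) : 1 ≠ 2 * x := by
  intro h
  have h2 := congrArg (ZMod.castHom hn (ZMod 2)) h
  simp only [map_one, map_mul, map_ofNat, show (2 : ZMod 2) = 0 from rfl, zero_mul] at h2
  exact one_ne_zero h2

theorem Function.Periodic.apply_ne_apply_succ {V : Type*} {g : ℕ → V} {m : ℕ}
    (hper : Function.Periodic g m) (hinj : Set.InjOn g (Set.Iio m)) (hm : 2 ≤ m) {t : ℕ}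
    (ht : t < m) : g t ≠ g (t + 1) := by
  intro h
  rcases Nat.lt_or_ge (t + 1) m with hlt | hge
  · exact absurd (hinj ht hlt h) (by omega)
  · rw [show t + 1 = 0 + m by omega, hper] at h
    exact absurd (hinj ht (Set.mem_Iio.mpr (by omega)) h) (by omega)

theorem existsUnique_edge_of_injective {V ι : Type*} [Fintype V] [DecidableEq V] [Fintype ι]
    {m : ℕ} (f : ι → ℕ → V)
    (hcard : Fintype.card ι * m = Fintype.card V * Fintype.card V - Fintype.card V)
    (hloop : ∀ i, ∀ t < m, f i t ≠ f i (t + 1))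
    (hinj : ∀ x y : ι × Fin m, f x.1 x.2 = f y.1 y.2 → f x.1 (x.2 + 1) = f y.1 (y.2 + 1) → x = y)
    {u v : V} (huv : u ≠ v) : ∃! x : ι × Fin m, f x.1 x.2 = u ∧ f x.1 (x.2 + 1) = v := by
  let e : ι × Fin m → V × V := fun x => (f x.1 x.2, f x.1 (x.2 + 1))
  have he : Function.Injective e := fun x y h => hinj x y (congrArg Prod.fst h) (congrArg Prod.snd h)
  have hsub : Finset.univ.image e ⊆ Finset.univ.offDiag := by
    intro p hp
    obtain ⟨x, -, rfl⟩ := Finset.mem_image.mp hp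
    exact Finset.mem_offDiag.mpr ⟨Finset.mem_univ _, Finset.mem_univ _, hloop x.1 x.2 x.2.isLt⟩
  have himage : Finset.univ.image e = Finset.univ.offDiag :=
    Finset.eq_of_subset_of_card_le hsub (by
      rw [Finset.offDiag_card, Finset.card_image_of_injective _ he]
      simp [hcard])
  have huv' : (u, v) ∈ Finset.univ.image e :=
    himage ▸ Finset.mem_offDiag.mpr ⟨Finset.mem_univ u, Finset.mem_univ v, huv⟩
  obtain ⟨x, -, hx⟩ := Finset.mem_image.mp huv'
  exact ⟨x, Prod.ext_iff.mp hx, fun y hy => he (hx ▸ Prod.ext hy.1 hy.2)⟩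

section EdgeLengths

variable {n k : ℕ} {l : ℕ → ℤ}

theorem edgeLength_mem_Ioc (hk : 0 < k) (hl1 : l 1 = k)
    (hbound : ∀ t, 2 ≤ t → t ≤ n - 1 → 1 ≤ (l t).natAbs ∧ (l t).natAbs ≤ k - 1)
    {t : ℕ} (ht₁ : 1 ≤ t) (ht : t ≤ n - 1) : l t ∈ Set.Ioc (-(k : ℤ)) k := by
  rcases eq_or_lt_of_le ht₁ with rfl | ht₂
  · rw [hl1]; constructor <;> omega
  · have := hbound t ht₂ ht; constructor <;> omega

theorem edgeLength_eq_of_intCast_eq (hn : 2 * k = n) (hk : 0 < k) (hl1 : l 1 = k)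
    (hbound : ∀ t, 2 ≤ t → t ≤ n - 1 → 1 ≤ (l t).natAbs ∧ (l t).natAbs ≤ k - 1)
    {a b : ℕ} (ha₁ : 1 ≤ a) (ha : a ≤ n - 1) (hb₁ : 1 ≤ b) (hb : b ≤ n - 1)
    (h : (l a : ZMod n) = l b) : l a = l b :=
  ZMod.intCast_injOn_Ioc (by omega) (edgeLength_mem_Ioc hk hl1 hbound ha₁ ha)
    (edgeLength_mem_Ioc hk hl1 hbound hb₁ hb) h

theorem eq_one_of_intCast_edgeLength_eq_neg (hn : 2 * k = n) (hk : 0 < k) (hl1 : l 1 = k)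
    (hbound : ∀ t, 2 ≤ t → t ≤ n - 1 → 1 ≤ (l t).natAbs ∧ (l t).natAbs ≤ k - 1)
    (hsame : ∀ j : ℕ, 1 ≤ j → j ≤ k - 1 → ∀ t t', t ∈ Finset.Icc 1 (n - 1) →
      t' ∈ Finset.Icc 1 (n - 1) → (l t).natAbs = j → (l t').natAbs = j → l t = l t')
    {a b : ℕ} (ha₁ : 1 ≤ a) (ha : a ≤ n - 1) (hb₁ : 1 ≤ b) (hb : b ≤ n - 1)
    (h : (l a : ZMod n) = -l b) : a = 1 ∧ b = 1 := by
  have eq_one : ∀ t, 1 ≤ t → t ≤ n - 1 → l t = k → t = 1 := fun t ht₁ ht hlt => by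
    by_contra hne
    have := hbound t (by omega) ht
    omega
  by_cases hak : l a = k
  · have hnk : ((k : ℤ) : ZMod n) = -(k : ℤ) := by
      rw [eq_neg_iff_add_eq_zero, ← Int.cast_add, ZMod.intCast_zmod_eq_zero_iff_dvd]
      exact ⟨1, by omega⟩
    have hbk : l b = k := by
      rw [← hl1]
      refine edgeLength_eq_of_intCast_eq hn hk hl1 hbound hb₁ hb le_rfl (by omega) ?_
      rw [hl1, hnk, ← hak, h, neg_neg]
    exact ⟨eq_one a ha₁ ha hak, eq_one b hb₁ hb hbk⟩
  · have ha₂ : 2 ≤ a := by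
      by_contra
      obtain rfl : a = 1 := by omega
      exact hak hl1
    have hla := hbound a ha₂ ha
    have hba : l b = -l a := ZMod.intCast_injOn_Ioc (n := n) (m := -k) (M := k) (by omega)
      (edgeLength_mem_Ioc hk hl1 hbound hb₁ hb)
      (show -l a ∈ Set.Ioc (-(k : ℤ)) k from ⟨by omega, by omega⟩) (by push_cast; rw [h, neg_neg])
    have := hsame (l a).natAbs hla.1 hla.2 a b
      (Finset.mem_Icc.mpr ⟨ha₁, ha⟩) (Finset.mem_Icc.mpr ⟨hb₁, hb⟩) rfl (by omega)
    omega

end EdgeLengths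

def cyclicPartialSum (n : ℕ) (l : ℕ → ℤ) (t : ℕ) : ZMod n :=
  nomadPartialSum l (t % (n - 1))

section CyclicPartialSum

variable {n : ℕ} {l : ℕ → ℤ}

theorem cyclicPartialSum_periodic : Function.Periodic (cyclicPartialSum n l) (n - 1) := by
  intro t
  simp only [cyclicPartialSum, Nat.add_mod_right]

theorem cyclicPartialSum_of_lt {t : ℕ} (ht : t < n - 1) :
    cyclicPartialSum n l t = nomadPartialSum l t := by
  rw [cyclicPartialSum, Nat.mod_eq_of_lt ht]

theorem cyclicPartialSum_zero : cyclicPartialSum n l 0 = 0 := by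
  simp [cyclicPartialSum, nomadPartialSum]

theorem cyclicPartialSum_succ (hzero : (n : ℤ) ∣ nomadPartialSum l (n - 1)) {t : ℕ}
    (ht : t < n - 1) : cyclicPartialSum n l (t + 1) = cyclicPartialSum n l t + l (t + 1) := by
  have hsucc : cyclicPartialSum n l (t + 1) = nomadPartialSum l (t + 1) := by
    rcases Nat.lt_or_ge (t + 1) (n - 1) with hlt | hge
    · exact cyclicPartialSum_of_lt hlt
    · rw [show t + 1 = n - 1 by omega, cyclicPartialSum, Nat.mod_self,
        (ZMod.intCast_zmod_eq_zero_iff_dvd _ _).mpr hzero]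
      simp [nomadPartialSum]
  rw [hsucc, cyclicPartialSum_of_lt ht, ← Int.cast_add]
  exact congrArg _ (Finset.sum_Icc_succ_top (by omega) l)

theorem cyclicPartialSum_injOn
    (hdistinct : ∀ t₁ t₂, t₁ ≤ n - 2 → t₂ ≤ n - 2 →
      ((nomadPartialSum l t₁ : ℤ) : ZMod n) = ((nomadPartialSum l t₂ : ℤ) : ZMod n) → t₁ = t₂) :
    Set.InjOn (cyclicPartialSum n l) (Set.Iio (n - 1)) := fun t₁ h₁ t₂ h₂ h => by
  rw [cyclicPartialSum_of_lt h₁, cyclicPartialSum_of_lt h₂] at h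
  rw [Set.mem_Iio] at h₁ h₂
  exact hdistinct t₁ t₂ (by omega) (by omega) h

end CyclicPartialSum

section NomadFamily

variable {n k : ℕ} {l : ℕ → ℤ}

theorem nomadFamily_inl (c : Fin (n / 2)) (t : ℕ) :
    nomadFamily n k l (.inl c) t = cyclicPartialSum n l t + 2 * (c : ℕ) :=
  rfl

theorem nomadFamily_inr (hn : 2 * k = n) (c : Fin (n / 2)) (t : ℕ) :
    nomadFamily n k l (.inr c) t = 1 + 2 * (c : ℕ) - cyclicPartialSum n l t := by
  have hk : ((2 * k : ℕ) : ZMod n) = 0 := by rw [hn]; exact ZMod.natCast_self n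
  simp only [nomadFamily, nomadPartialSum', cyclicPartialSum]
  split_ifs with h
  · simp [h, nomadPartialSum]
  · push_cast at hk ⊢
    linear_combination hk

theorem nomadFamily_periodic (i : Fin (n / 2) ⊕ Fin (n / 2)) :
    Function.Periodic (nomadFamily n k l i) (n - 1) := by
  intro t
  rcases i with c | c <;> simp only [nomadFamily, Nat.add_mod_right]

theorem nomadFamily_injOn (hn : 2 * k = n)
    (hdistinct : ∀ t₁ t₂, t₁ ≤ n - 2 → t₂ ≤ n - 2 →
      ((nomadPartialSum l t₁ : ℤ) : ZMod n) = ((nomadPartialSum l t₂ : ℤ) : ZMod n) → t₁ = t₂)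
    (i : Fin (n / 2) ⊕ Fin (n / 2)) : Set.InjOn (nomadFamily n k l i) (Set.Iio (n - 1)) := by
  rcases i with c | c
  · exact ((add_left_injective _).comp_injOn (cyclicPartialSum_injOn hdistinct)).congr
      fun t _ => (nomadFamily_inl c t).symm
  · exact ((sub_right_injective).comp_injOn (cyclicPartialSum_injOn hdistinct)).congr
      fun t _ => (nomadFamily_inr hn c t).symm

theorem nomadFamily_ne (hn : 2 * k = n) {i j : Fin (n / 2) ⊕ Fin (n / 2)} (hij : i ≠ j) (t : ℕ) :
    nomadFamily n k l i t ≠ nomadFamily n k l j t := by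
  have h2 : 2 ∣ n := ⟨k, hn.symm⟩
  intro h
  rcases i with c | c <;> rcases j with c' | c' <;>
    simp only [nomadFamily_inl, nomadFamily_inr hn] at h
  · exact hij (congrArg _ (ZMod.two_mul_val_inj.mp (add_left_cancel h)))
  · exact ZMod.one_ne_two_mul h2 (cyclicPartialSum n l t + c - c') (by linear_combination -h)
  · exact ZMod.one_ne_two_mul h2 (cyclicPartialSum n l t + c' - c) (by linear_combination h)
  · exact hij (congrArg _ (ZMod.two_mul_val_inj.mp (add_left_cancel (sub_left_inj.mp h))))

theorem eq_of_intCast_edgeLength_eq (h2 : 2 ∣ n)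
    (hsame : ∀ a b, 1 ≤ a → a ≤ n - 1 → 1 ≤ b → b ≤ n - 1 → (l a : ZMod n) = l b → l a = l b)
    (hparity : ∀ t t', t ∈ Finset.Icc 1 (n - 1) → t' ∈ Finset.Icc 1 (n - 1) → t ≠ t' →
      l t = l t' → nomadPartialSum l (t - 1) % 2 ≠ nomadPartialSum l (t' - 1) % 2)
    {t t' : ℕ} (ht : t < n - 1) (ht' : t' < n - 1) {x : ZMod n}
    (hS : cyclicPartialSum n l t = cyclicPartialSum n l t' + 2 * x)
    (hl : (l (t + 1) : ZMod n) = l (t' + 1)) : t = t' := by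
  by_contra hne
  refine hparity (t + 1) (t' + 1) (Finset.mem_Icc.mpr ⟨by omega, by omega⟩)
    (Finset.mem_Icc.mpr ⟨by omega, by omega⟩) (by omega)
    (hsame _ _ (by omega) (by omega) (by omega) (by omega) hl) ?_
  rw [cyclicPartialSum_of_lt ht, cyclicPartialSum_of_lt ht'] at hS
  exact ZMod.intCast_emod_two_eq_of_eq_add_two_mul h2 hS

theorem nomadFamily_edge_inj (hn : 2 * k = n) (hzero : (n : ℤ) ∣ nomadPartialSum l (n - 1))
    (hsame : ∀ a b, 1 ≤ a → a ≤ n - 1 → 1 ≤ b → b ≤ n - 1 → (l a : ZMod n) = l b → l a = l b)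
    (hopp : ∀ a b, 1 ≤ a → a ≤ n - 1 → 1 ≤ b → b ≤ n - 1 → (l a : ZMod n) = -l b →
      a = 1 ∧ b = 1)
    (hparity : ∀ t t', t ∈ Finset.Icc 1 (n - 1) → t' ∈ Finset.Icc 1 (n - 1) → t ≠ t' →
      l t = l t' → nomadPartialSum l (t - 1) % 2 ≠ nomadPartialSum l (t' - 1) % 2)
    {i j : Fin (n / 2) ⊕ Fin (n / 2)} {t t' : ℕ} (ht : t < n - 1) (ht' : t' < n - 1)
    (h₁ : nomadFamily n k l i t = nomadFamily n k l j t')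
    (h₂ : nomadFamily n k l i (t + 1) = nomadFamily n k l j (t' + 1)) : i = j ∧ t = t' := by
  have h2 : 2 ∣ n := ⟨k, hn.symm⟩
  have start_zero : ∀ {s s'}, s < n - 1 → s' < n - 1 → (l (s + 1) : ZMod n) = -l (s' + 1) →
      cyclicPartialSum n l s = 0 ∧ cyclicPartialSum n l s' = 0 := fun {s s'} hs hs' h => by
    obtain ⟨hs0, hs'0⟩ := hopp _ _ (by omega) (by omega) (by omega) (by omega) h
    obtain ⟨rfl, rfl⟩ : s = 0 ∧ s' = 0 := by omega
    exact ⟨cyclicPartialSum_zero, cyclicPartialSum_zero⟩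
  rcases i with c | c <;> rcases j with c' | c' <;>
    simp only [nomadFamily_inl, nomadFamily_inr hn, cyclicPartialSum_succ hzero ht,
      cyclicPartialSum_succ hzero ht'] at h₁ h₂
  · obtain rfl := eq_of_intCast_edgeLength_eq h2 hsame hparity ht ht' (x := c' - c)
      (by linear_combination h₁) (by linear_combination h₂ - h₁)
    exact ⟨congrArg _ (ZMod.two_mul_val_inj.mp (add_left_cancel h₁)), rfl⟩
  · obtain ⟨hs, hs'⟩ := start_zero ht ht' (by linear_combination h₂ - h₁)
    exact (ZMod.one_ne_two_mul h2 (c - c') (by linear_combination hs + hs' - h₁)).elim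
  · obtain ⟨hs, hs'⟩ := start_zero ht ht' (by linear_combination h₁ - h₂)
    exact (ZMod.one_ne_two_mul h2 (c' - c) (by linear_combination hs + hs' + h₁)).elim
  · obtain rfl := eq_of_intCast_edgeLength_eq h2 hsame hparity ht ht' (x := c - c')
      (by linear_combination -h₁) (by linear_combination h₁ - h₂)
    exact ⟨congrArg _ (ZMod.two_mul_val_inj.mp (add_left_cancel (sub_left_inj.mp h₁))), rfl⟩

end NomadFamily

/-- If an edge-length sequence `l_1, …, l_{n-1}` as produced for `n ≡ 0 (mod 4)` exists
(for even `n ≥ 4`, `k = n/2`), then the explicit family of nomads `g_c(t) = S_t + 2c` and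
`h_c(t) = 1 + 2c + T_t` (indices mod `n-1`) is a nomadic near-Hamiltonian decomposition
of `K*_n`. -/
theorem nomadic_decomposition_of_edge_length_sequence (n k : ℕ) (hn : 4 ≤ n)
    (heven : n % 2 = 0) (hk : k = n / 2) (l : ℕ → ℤ)
    (hl1 : l 1 = (k : ℤ))
    (hbound : ∀ t, 2 ≤ t → t ≤ n - 1 → 1 ≤ (l t).natAbs ∧ (l t).natAbs ≤ k - 1)
    (htwo : ∀ j : ℕ, 1 ≤ j → j ≤ k - 1 →
      ((Finset.Icc 1 (n - 1)).filter (fun t => (l t).natAbs = j)).card = 2 ∧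
      (∀ t t', t ∈ Finset.Icc 1 (n - 1) → t' ∈ Finset.Icc 1 (n - 1) →
        (l t).natAbs = j → (l t').natAbs = j → l t = l t'))
    (hdistinct : ∀ t₁ t₂, t₁ ≤ n - 2 → t₂ ≤ n - 2 →
      ((nomadPartialSum l t₁ : ℤ) : ZMod n) = ((nomadPartialSum l t₂ : ℤ) : ZMod n) →
      t₁ = t₂)
    (hzero : (n : ℤ) ∣ nomadPartialSum l (n - 1))
    (hparity : ∀ t t', t ∈ Finset.Icc 1 (n - 1) → t' ∈ Finset.Icc 1 (n - 1) → t ≠ t' →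
      l t = l t' →
      nomadPartialSum l (t - 1) % 2 ≠ nomadPartialSum l (t' - 1) % 2) :
    -- each nomad traces a near-Hamiltonian cycle: period n-1 …
    (∀ i, ∀ t, nomadFamily n k l i (t + (n - 1)) = nomadFamily n k l i t) ∧
    -- … and injective on {0, …, n-2}
    (∀ i, ∀ t₁ t₂, t₁ < n - 1 → t₂ < n - 1 →
      nomadFamily n k l i t₁ = nomadFamily n k l i t₂ → t₁ = t₂) ∧
    -- every ordered pair of distinct vertices occurs exactly once as a consecutive pair
    (∀ u v : ZMod n, u ≠ v →
      ∃! x : (Fin (n / 2) ⊕ Fin (n / 2)) × Fin (n - 1),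
        nomadFamily n k l x.1 (x.2 : ℕ) = u ∧ nomadFamily n k l x.1 ((x.2 : ℕ) + 1) = v) ∧
    -- nomadic: distinct nomads never collide
    (∀ i j, i ≠ j → ∀ t, nomadFamily n k l i t ≠ nomadFamily n k l j t) := by
  have hn2 : 2 * k = n := by omega
  have hk0 : 0 < k := by omega
  have : NeZero n := ⟨by omega⟩
  have hsame : ∀ a b, 1 ≤ a → a ≤ n - 1 → 1 ≤ b → b ≤ n - 1 → (l a : ZMod n) = l b → l a = l b :=
    fun a b ha₁ ha hb₁ hb => edgeLength_eq_of_intCast_eq hn2 hk0 hl1 hbound ha₁ ha hb₁ hb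
  have hopp : ∀ a b, 1 ≤ a → a ≤ n - 1 → 1 ≤ b → b ≤ n - 1 → (l a : ZMod n) = -l b →
      a = 1 ∧ b = 1 := fun a b ha₁ ha hb₁ hb =>
    eq_one_of_intCast_edgeLength_eq_neg hn2 hk0 hl1 hbound (fun j hj₁ hj => (htwo j hj₁ hj).2)
      ha₁ ha hb₁ hb
  have hinjOn := nomadFamily_injOn (l := l) hn2 hdistinct
  refine ⟨nomadFamily_periodic, fun i t₁ t₂ h₁ h₂ h => hinjOn i h₁ h₂ h, fun u v huv => ?_,
    fun i j hij t => nomadFamily_ne hn2 hij t⟩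
  refine existsUnique_edge_of_injective _ ?_
    (fun i t ht => (nomadFamily_periodic i).apply_ne_apply_succ (hinjOn i) (by omega) (t := t) ht)
    (fun x y h₁ h₂ => ?_) huv
  · rw [Fintype.card_sum, Fintype.card_fin, ZMod.card, show n / 2 + n / 2 = n by omega,
      Nat.mul_sub_one]
  · obtain ⟨hij, htt⟩ := nomadFamily_edge_inj hn2 hzero hsame hopp hparity x.2.isLt y.2.isLt h₁ h₂
    exact Prod.ext hij (Fin.ext htt)
end
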